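/- arXiv:2504.16690 — 11 statements merged into one kernel-verified Lean document; each statement's English description precedes it below -/
import Mathlib

section
/- In a bicategory B, a 1-cell f : X ⟶ Y admits a left adjoint if and only if the right Kan extension of the identity 1-cell 1_X along f exists and is preserved by f (i.e. the composite f ∘ ran_f(1_X), equipped with the whiskered counit 2-cell, is a right Kan extension of f along f). Moreover, in that case, writing l for the left adjoint of f, for every object Z and every 1-cell x : X ⟶ Z the composite x ∘ l, equipped with the 2-cell obtained by whiskering x with the counit of the adjunction l ⊣ f, is an absolute right Kan extension of x along f (it is preserved by every 1-cell out of Z). -/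
/-!
If `l ⊣ f`, the unit and counit turn a 2-cell `f ≫ y ⟶ x` into `y ⟶ l ≫ x` and back, and the
triangle identities make these assignments mutually inverse; since `(l ≫ x) ≫ h ≅ l ≫ (x ≫ h)`
is compatible with the counits, the extension is absolute. Conversely, if `f` preserves the right
Kan extension `(r, ε)` of `𝟙 X` along `f`, the unit `η : 𝟙 Y ⟶ r ≫ f` is the 2-cell classified by
the unitor `𝟙 X ≫ f ≅ f ≫ 𝟙 Y`, so the right triangle identity holds by construction; the left
one follows from the uniqueness part of the universal property of `ε`.
-/

universe w v u

open CategoryTheory CategoryTheory.Bicategory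

variable {B : Type u} [Bicategory.{w, v} B]

/-- `(r, ε)` is a right Kan extension of `x : A ⟶ X` along `f : A ⟶ Y`:
for every `y : Y ⟶ X`, composition with `ε` induces a bijection between
2-cells `y ⟶ r` and 2-cells `f ≫ y ⟶ x`. -/
def IsRanCounit {A Y X : B} (f : A ⟶ Y) (x : A ⟶ X) (r : Y ⟶ X) (eps : f ≫ r ⟶ x) : Prop :=
  ∀ (y : Y ⟶ X) (α : f ≫ y ⟶ x), ∃! τ : y ⟶ r, f ◁ τ ≫ eps = α

namespace IsRanCounit

variable {A Y X : B} {f : A ⟶ Y} {x : A ⟶ X} {r : Y ⟶ X} {eps : f ≫ r ⟶ x}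

theorem hom_ext (H : IsRanCounit f x r eps) {y : Y ⟶ X} {τ τ' : y ⟶ r}
    (h : f ◁ τ ≫ eps = f ◁ τ' ≫ eps) : τ = τ' :=
  (H y _).unique h rfl

theorem of_iso {r' : Y ⟶ X} (φ : r' ≅ r) {eps' : f ≫ r' ⟶ x}
    (heps : eps' = f ◁ φ.hom ≫ eps) (H : IsRanCounit f x r eps) : IsRanCounit f x r' eps' := by
  intro y α
  obtain ⟨τ, hτ, -⟩ := H y α
  refine ⟨τ ≫ φ.inv, by simpa [heps] using hτ, fun τ' hτ' => ?_⟩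
  have : τ' ≫ φ.hom = τ := H.hom_ext (by simpa [heps, hτ] using hτ')
  simp [← this]

/-- The endo-2-cell `η ▷ r ⊗≫ r ◁ ε` of `r` is the identity because, by the right triangle
identity, composing it with `ε` gives `ε` back. -/
theorem leftZigzag_eq {r : Y ⟶ A} {eps : f ≫ r ⟶ 𝟙 A} (H : IsRanCounit f (𝟙 A) r eps)
    {η : 𝟙 Y ⟶ r ≫ f} (hη : rightZigzag η eps = (ρ_ f).hom ≫ (λ_ f).inv) :
    leftZigzag η eps = (λ_ r).hom ≫ (ρ_ r).inv := by
  have hσ : (λ_ r).inv ≫ η ▷ r ≫ (α_ r f r).hom ≫ r ◁ eps ≫ (ρ_ r).hom = 𝟙 r := by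
    apply H.hom_ext
    calc f ◁ ((λ_ r).inv ≫ η ▷ r ≫ (α_ r f r).hom ≫ r ◁ eps ≫ (ρ_ r).hom) ≫ eps
      _ = 𝟙 _ ⊗≫ f ◁ η ▷ r ⊗≫ ((f ≫ r) ◁ eps ≫ eps ▷ 𝟙 A) ⊗≫ 𝟙 _ := by bicategory
      _ = 𝟙 _ ⊗≫ rightZigzag η eps ▷ r ⊗≫ eps ⊗≫ 𝟙 _ := by
          rw [whisker_exchange]; bicategory
      _ = f ◁ 𝟙 r ≫ eps := by rw [hη]; bicategory
  calc leftZigzag η eps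
    _ = (λ_ r).hom ≫ ((λ_ r).inv ≫ η ▷ r ≫ (α_ r f r).hom ≫ r ◁ eps ≫ (ρ_ r).hom) ≫
        (ρ_ r).inv := by bicategory
    _ = (λ_ r).hom ≫ (ρ_ r).inv := by rw [hσ]; simp

end IsRanCounit

theorem nonempty_adjunction_of_isRanCounit {X Y : B} {f : X ⟶ Y} {r : Y ⟶ X}
    {eps : f ≫ r ⟶ 𝟙 X} (H : IsRanCounit f (𝟙 X) r eps)
    (Hf : IsRanCounit f (𝟙 X ≫ f) (r ≫ f) ((α_ f r f).inv ≫ eps ▷ f)) :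
    Nonempty (Bicategory.Adjunction r f) := by
  obtain ⟨η, hη, -⟩ := Hf (𝟙 Y) ((ρ_ f).hom ≫ (λ_ f).inv)
  have right_triangle : rightZigzag η eps = (ρ_ f).hom ≫ (λ_ f).inv := by
    rw [← hη]; bicategory
  exact ⟨⟨η, eps, H.leftZigzag_eq right_triangle, right_triangle⟩⟩

namespace CategoryTheory.Bicategory.Adjunction

variable {X Y Z : B} {l : Y ⟶ X} {f : X ⟶ Y}

theorem isRanCounit (adj : Bicategory.Adjunction l f) (x : X ⟶ Z) :
    IsRanCounit f x (l ≫ x) ((α_ f l x).inv ≫ adj.counit ▷ x ≫ (λ_ x).hom) := by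
  intro y α
  refine ⟨(λ_ y).inv ≫ adj.unit ▷ y ≫ (α_ l f y).hom ≫ l ◁ α, ?_, fun τ hτ => ?_⟩
  · calc f ◁ ((λ_ y).inv ≫ adj.unit ▷ y ≫ (α_ l f y).hom ≫ l ◁ α) ≫
        ((α_ f l x).inv ≫ adj.counit ▷ x ≫ (λ_ x).hom)
      _ = 𝟙 _ ⊗≫ f ◁ adj.unit ▷ y ⊗≫ ((f ≫ l) ◁ α ≫ adj.counit ▷ x) ⊗≫ 𝟙 _ := by
          bicategory
      _ = 𝟙 _ ⊗≫ rightZigzag adj.unit adj.counit ▷ y ⊗≫ α ⊗≫ 𝟙 _ := by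
          rw [whisker_exchange]; bicategory
      _ = α := by rw [adj.right_triangle]; bicategory
  · calc τ
      _ = 𝟙 _ ⊗≫ τ ⊗≫ leftZigzag adj.unit adj.counit ▷ x ⊗≫ 𝟙 _ := by
          rw [adj.left_triangle]; bicategory
      _ = 𝟙 _ ⊗≫ (adj.unit ▷ y ≫ (l ≫ f) ◁ τ) ⊗≫ l ◁ adj.counit ▷ x ⊗≫ 𝟙 _ := by
          rw [← whisker_exchange]; bicategory
      _ = (λ_ y).inv ≫ adj.unit ▷ y ≫ (α_ l f y).hom ≫ l ◁ α := by
          rw [← hτ]; bicategory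

theorem isRanCounit_whiskerRight (adj : Bicategory.Adjunction l f) (x : X ⟶ Z) {W : B}
    (h : Z ⟶ W) :
    IsRanCounit f (x ≫ h) ((l ≫ x) ≫ h)
      ((α_ f (l ≫ x) h).inv ≫ ((α_ f l x).inv ≫ adj.counit ▷ x ≫ (λ_ x).hom) ▷ h) :=
  (adj.isRanCounit (x ≫ h)).of_iso (α_ l x h) (by bicategory)

end CategoryTheory.Bicategory.Adjunction

/-- A 1-cell `f : X ⟶ Y` admits a left adjoint iff the right Kan extension of `𝟙 X`
along `f` exists and is preserved by `f`; moreover, in that case, for every `x : X ⟶ Z`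
the composite of `x` with the left adjoint `l`, equipped with the 2-cell obtained by
whiskering `x` with the counit of `l ⊣ f`, is an absolute right Kan extension of `x`
along `f`. -/
theorem statement0 {X Y : B} (f : X ⟶ Y) :
    ((∃ l : Y ⟶ X, Nonempty (Bicategory.Adjunction l f)) ↔
      ∃ (r : Y ⟶ X) (eps : f ≫ r ⟶ 𝟙 X),
        IsRanCounit f (𝟙 X) r eps ∧
        IsRanCounit f (𝟙 X ≫ f) (r ≫ f) ((α_ f r f).inv ≫ eps ▷ f)) ∧
    (∀ (l : Y ⟶ X) (adj : Bicategory.Adjunction l f) (Z : B) (x : X ⟶ Z),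
      IsRanCounit f x (l ≫ x) ((α_ f l x).inv ≫ adj.counit ▷ x ≫ (λ_ x).hom) ∧
      ∀ (W : B) (h : Z ⟶ W),
        IsRanCounit f (x ≫ h) ((l ≫ x) ≫ h)
          ((α_ f (l ≫ x) h).inv ≫
            ((α_ f l x).inv ≫ adj.counit ▷ x ≫ (λ_ x).hom) ▷ h)) := by
  refine ⟨⟨?_, ?_⟩, fun l adj Z x =>
    ⟨adj.isRanCounit x, fun W h => adj.isRanCounit_whiskerRight x h⟩⟩
  · rintro ⟨l, ⟨adj⟩⟩
    exact ⟨_, _, adj.isRanCounit (𝟙 X), adj.isRanCounit_whiskerRight (𝟙 X) f⟩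
  · rintro ⟨r, eps, H, Hf⟩
    exact ⟨r, nonempty_adjunction_of_isRanCounit H Hf⟩
end

section
/- Let C be a small category with finite limits, let E and F be Grothendieck topoi, and let f^* ⊣ f_* be an adjunction with f^* : F ⥤ E preserving finite limits. For every functor x^* : (Cᵒᵖ ⥤ Type) ⥤ E preserving finite limits and small colimits, let R(x^*) : (Cᵒᵖ ⥤ Type) ⥤ F be the pointwise left Kan extension along the Yoneda embedding y : C ⥤ (Cᵒᵖ ⥤ Type) of the composite f_* ∘ x^* ∘ y : C ⥤ F. Then R(x^*) preserves finite limits and small colimits, and for every functor g^* : (Cᵒᵖ ⥤ Type) ⥤ F preserving finite limits and small colimits there is a bijection, natural in g^*, between natural transformations f^* ∘ g^* ⟶ x^* and natural transformations g^* ⟶ R(x^*). (Presheaf topoi are weakly right Kan injective with respect to all geometric morphisms, the right Kan extension in the 2-category of topoi having inverse image R(x^*).) -/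
universe u

open CategoryTheory Limits

/-- A functor is (the inverse image of) a generalised point if it preserves finite limits
and small colimits. -/
def IsPoint {X : Type*} [Category X] {E : Type*} [Category E] (G : X ⥤ E) : Prop :=
  Nonempty (PreservesFiniteLimits G) ∧ Nonempty (PreservesColimitsOfSize.{u, u} G)

/-!
`R` preserves colimits because it is a left Kan extension along Yoneda. It preserves finite
limits because its restriction `yoneda ⋙ R ≅ yoneda ⋙ x^* ⋙ f_*` does: a colimit-preserving
functor out of a presheaf category is left exact as soon as its restriction to representables
is. For `Type`-valued functors this is the exactness of the fiber functor of a point of the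
trivial site `(C, ⊥)`; presheaf-valued functors are handled pointwise, and sheaf-valued ones by
sheafifying a presheaf-valued extension.

A colimit-preserving `g` is the left Kan extension of its restriction to representables, so a
transformation out of `g` is determined by its restriction. Hence
`(g ⋙ f^* ⟶ x^*) ≃ (g ⟶ x^* ⋙ f_*)` by the adjunction, and `(g ⟶ x^* ⋙ f_*) ≃ (g ⟶ R)`
because `x^* ⋙ f_*` and `R` agree on representables through the isomorphism `α`.
-/

open CategoryTheory.Functor

namespace CategoryTheory

lemma Functor.isLeftKanExtension_of_iso₁ {C D H : Type*} [Category C] [Category D] [Category H]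
    (F' : D ⥤ H) {L L' : C ⥤ D} (iso₁ : L ≅ L') {F : C ⥤ H} (α : F ⟶ L ⋙ F')
    [F'.IsLeftKanExtension α] : F'.IsLeftKanExtension (α ≫ whiskerRight iso₁.hom F') :=
  ⟨⟨(IsInitial.isInitialIffObj (leftExtensionEquivalenceOfIso₁ iso₁ F).functor
    (LeftExtension.mk F' α)).1 (F'.isUniversalOfIsLeftKanExtension α)⟩⟩

section HomEquiv

variable {C D E : Type*} [Category C] [Category D] [Category E]

noncomputable def Functor.homEquivOfRestrictionIso (g : D ⥤ E) {W : C ⥤ D} {H H' : D ⥤ E}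
    [g.IsLeftKanExtension (𝟙 (W ⋙ g))] (ι : W ⋙ H ≅ W ⋙ H') :
    (g ⟶ H) ≃ (g ⟶ H') :=
  (g.homEquivOfIsLeftKanExtension (𝟙 _) H).trans
    (((Iso.refl _).homCongr ι).trans (g.homEquivOfIsLeftKanExtension (𝟙 _) H').symm)

lemma Functor.whiskerLeft_homEquivOfRestrictionIso (g : D ⥤ E) {W : C ⥤ D} {H H' : D ⥤ E}
    [g.IsLeftKanExtension (𝟙 (W ⋙ g))] (ι : W ⋙ H ≅ W ⋙ H') (γ : g ⟶ H) :
    whiskerLeft W (g.homEquivOfRestrictionIso ι γ) = whiskerLeft W γ ≫ ι.hom := by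
  simpa [homEquivOfRestrictionIso, homEquivOfIsLeftKanExtension] using
    g.descOfIsLeftKanExtension_fac (𝟙 (W ⋙ g)) H' (whiskerLeft W γ ≫ ι.hom)

lemma Functor.homEquivOfRestrictionIso_comp {g g' : D ⥤ E} {W : C ⥤ D} {H H' : D ⥤ E}
    [g.IsLeftKanExtension (𝟙 (W ⋙ g))] [g'.IsLeftKanExtension (𝟙 (W ⋙ g'))]
    (ι : W ⋙ H ≅ W ⋙ H') (φ : g' ⟶ g) (γ : g ⟶ H) :
    g'.homEquivOfRestrictionIso ι (φ ≫ γ) = φ ≫ g.homEquivOfRestrictionIso ι γ :=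
  g'.hom_ext_of_isLeftKanExtension (𝟙 (W ⋙ g')) _ _ (by
    simp only [whiskerLeft_comp, whiskerLeft_homEquivOfRestrictionIso, Category.assoc])

end HomEquiv

noncomputable def GrothendieckTopology.Point.ofPreservesFiniteLimits {C : Type u}
    [SmallCategory C] [HasFiniteLimits C] (F : C ⥤ Type u) [PreservesFiniteLimits F] :
    (⊥ : GrothendieckTopology C).Point where
  fiber := F
  isCofiltered := F.isCofiltered_elements
  initiallySmall := initiallySmall_of_essentiallySmall _
  jointly_surjective R hR x := by
    rw [GrothendieckTopology.bot_covering] at hR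
    exact ⟨_, 𝟙 _, by simp [hR], x, by simp⟩

namespace Presheaf

variable {C : Type u} [SmallCategory C]

section

variable {E : Type*} [Category.{u} E] [HasColimitsOfSize.{u, u} E]

lemma isLeftKanExtension_yoneda_of_preservesColimits {A : C ⥤ E}
    (L : (Cᵒᵖ ⥤ Type u) ⥤ E) [PreservesColimitsOfSize.{u, u} L] (e : A ≅ yoneda ⋙ L) :
    L.IsLeftKanExtension e.hom := by
  let e' := e ≪≫ isoWhiskerRight uliftYonedaIsoYoneda.{u}.symm L
  have := isLeftKanExtension_of_preservesColimits.{0} L e'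
  convert L.isLeftKanExtension_of_iso₁ uliftYonedaIsoYoneda.{u} e'.hom
  ext X
  simp [e', ← Functor.map_comp]

lemma preservesColimitsOfSize_of_isLeftKanExtension_yoneda {A : C ⥤ E}
    (L : (Cᵒᵖ ⥤ Type u) ⥤ E) (α : A ⟶ yoneda ⋙ L) [L.IsLeftKanExtension α] :
    PreservesColimitsOfSize.{u, u} L := by
  have := L.isLeftKanExtension_of_iso₁ uliftYonedaIsoYoneda.{u}.symm α
  exact preservesColimitsOfSize_of_isLeftKanExtension.{0} L
    (α ≫ whiskerRight uliftYonedaIsoYoneda.{u}.symm.hom L)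

noncomputable def isoOfYonedaCompIso (L L' : (Cᵒᵖ ⥤ Type u) ⥤ E)
    [PreservesColimitsOfSize.{u, u} L] [PreservesColimitsOfSize.{u, u} L']
    (e : yoneda ⋙ L ≅ yoneda ⋙ L') : L ≅ L' :=
  have := isLeftKanExtension_yoneda_of_preservesColimits L (Iso.refl _)
  have := isLeftKanExtension_yoneda_of_preservesColimits L' e
  L.leftKanExtensionUnique (Iso.refl _).hom L' e.hom

end

section

variable [HasFiniteLimits C]

lemma preservesFiniteLimits_of_yoneda_comp (L : (Cᵒᵖ ⥤ Type u) ⥤ Type u)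
    [PreservesColimitsOfSize.{u, u} L] [PreservesFiniteLimits (yoneda ⋙ L)] :
    PreservesFiniteLimits L :=
  let Φ := GrothendieckTopology.Point.ofPreservesFiniteLimits (yoneda ⋙ L)
  preservesFiniteLimits_of_natIso (isoOfYonedaCompIso Φ.presheafFiber L
    (isoWhiskerRight shrinkYonedaIsoYoneda.symm _ ≪≫ Φ.shrinkYonedaCompPresheafFiberIso))

lemma preservesFiniteLimits_of_yoneda_comp_presheaf {D : Type u} [SmallCategory D]
    (L : (Cᵒᵖ ⥤ Type u) ⥤ Dᵒᵖ ⥤ Type u)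
    [PreservesColimitsOfSize.{u, u} L] [PreservesFiniteLimits (yoneda ⋙ L)] :
    PreservesFiniteLimits L := by
  refine ⟨fun J _ _ => preservesLimitsOfShape_of_evaluation _ _ fun d => ?_⟩
  have : PreservesFiniteLimits (yoneda ⋙ L ⋙ (evaluation Dᵒᵖ (Type u)).obj d) :=
    comp_preservesFiniteLimits (yoneda ⋙ L) ((evaluation Dᵒᵖ (Type u)).obj d)
  have := preservesFiniteLimits_of_yoneda_comp (L ⋙ (evaluation Dᵒᵖ (Type u)).obj d)
  exact this.preservesFiniteLimits J

lemma preservesFiniteLimits_of_yoneda_comp_sheaf {D : Type u} [SmallCategory D]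
    {K : GrothendieckTopology D} (L : (Cᵒᵖ ⥤ Type u) ⥤ Sheaf K (Type u))
    [PreservesColimitsOfSize.{u, u} L] [PreservesFiniteLimits (yoneda ⋙ L)] :
    PreservesFiniteLimits L := by
  have : HasColimitsOfSize.{u, u} (Sheaf K (Type u)) := Sheaf.instHasColimitsOfSize
  let B := yoneda ⋙ L ⋙ sheafToPresheaf K (Type u)
  let L₀ := uliftYoneda.{u}.leftKanExtension B
  let e₀ : yoneda ⋙ L₀ ≅ B :=
    isoWhiskerRight uliftYonedaIsoYoneda.{u}.symm L₀ ≪≫ isExtensionAlongULiftYoneda.{0} B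
  have : PreservesFiniteLimits B := comp_preservesFiniteLimits (yoneda ⋙ L) (sheafToPresheaf K _)
  have : PreservesColimitsOfSize.{u, u} L₀ := preservesColimitsOfSize_leftKanExtension.{0} B
  have : PreservesFiniteLimits (yoneda ⋙ L₀) := preservesFiniteLimits_of_natIso e₀.symm
  have := preservesFiniteLimits_of_yoneda_comp_presheaf L₀
  have : PreservesFiniteLimits (L₀ ⋙ presheafToSheaf K (Type u)) :=
    comp_preservesFiniteLimits _ _
  exact preservesFiniteLimits_of_natIso (isoOfYonedaCompIso (L₀ ⋙ presheafToSheaf K (Type u)) L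
    (isoWhiskerRight e₀ _ ≪≫ isoWhiskerLeft (yoneda ⋙ L)
      (asIso (sheafificationAdjunction K (Type u)).counit)))

end

end Presheaf

end CategoryTheory

theorem statement4_general {C : Type u} [SmallCategory C] [HasFiniteLimits C]
    {D₁ D₂ : Type u} [SmallCategory D₁] [SmallCategory D₂]
    (J : GrothendieckTopology D₁) (K : GrothendieckTopology D₂)
    (fstar : Sheaf K (Type u) ⥤ Sheaf J (Type u))
    (fsub : Sheaf J (Type u) ⥤ Sheaf K (Type u))
    (adj : fstar ⊣ fsub)
    (xstar : (Cᵒᵖ ⥤ Type u) ⥤ Sheaf J (Type u))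
    (hx : IsPoint.{u} xstar)
    (R : (Cᵒᵖ ⥤ Type u) ⥤ Sheaf K (Type u))
    (α : yoneda ⋙ xstar ⋙ fsub ⟶ yoneda ⋙ R)
    (hR : (Functor.LeftExtension.mk R α).IsPointwiseLeftKanExtension) :
    IsPoint.{u} R ∧
    ∃ e : ∀ g : (Cᵒᵖ ⥤ Type u) ⥤ Sheaf K (Type u),
        IsPoint.{u} g → (((g ⋙ fstar) ⟶ xstar) ≃ (g ⟶ R)),
      ∀ (g g' : (Cᵒᵖ ⥤ Type u) ⥤ Sheaf K (Type u)) (hg : IsPoint.{u} g)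
        (hg' : IsPoint.{u} g') (φ : g' ⟶ g) (β : (g ⋙ fstar) ⟶ xstar),
        e g' hg' (Functor.whiskerRight φ fstar ≫ β) = φ ≫ e g hg β := by
  have : HasColimitsOfSize.{u, u} (Sheaf K (Type u)) := Sheaf.instHasColimitsOfSize
  have := hx.1.some
  have : R.IsLeftKanExtension α := hR.isLeftKanExtension
  have : IsIso α := hR.isIso_hom
  have : PreservesLimitsOfSize.{0, 0} fsub := adj.rightAdjoint_preservesLimits
  have : PreservesFiniteLimits (yoneda ⋙ R) :=
    preservesFiniteLimits_of_natIso (F := yoneda ⋙ xstar ⋙ fsub) (asIso α)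
  have : PreservesColimitsOfSize.{u, u} R :=
    Presheaf.preservesColimitsOfSize_of_isLeftKanExtension_yoneda R α
  have isLKE : ∀ g : (Cᵒᵖ ⥤ Type u) ⥤ Sheaf K (Type u), IsPoint.{u} g →
      g.IsLeftKanExtension (𝟙 (yoneda ⋙ g)) := fun g hg =>
    have := hg.2.some
    Presheaf.isLeftKanExtension_yoneda_of_preservesColimits g (Iso.refl _)
  refine ⟨⟨⟨Presheaf.preservesFiniteLimits_of_yoneda_comp_sheaf R⟩, ⟨inferInstance⟩⟩,
    fun g hg => have := isLKE g hg
      ((adj.whiskerRight _).homEquiv g xstar).trans (g.homEquivOfRestrictionIso (asIso α)), ?_⟩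
  intro g g' hg hg' φ β
  have := isLKE g hg
  have := isLKE g' hg'
  exact (congrArg _ ((adj.whiskerRight _).homEquiv_naturality_left φ β)).trans
    (homEquivOfRestrictionIso_comp _ _ _)

/-- Presheaf topoi are weakly right Kan injective with respect to all geometric morphisms:
if `R` is the pointwise left Kan extension along Yoneda of `f_* ∘ x^* ∘ y`, then `R`
preserves finite limits and small colimits, and for every inverse image
`g^* : (Cᵒᵖ ⥤ Type) ⥤ F` there is a bijection, natural in `g^*`, between natural
transformations `f^* ∘ g^* ⟶ x^*` and natural transformations `g^* ⟶ R`. -/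
theorem statement4 {C : Type u} [SmallCategory C] [HasFiniteLimits C]
    {D₁ D₂ : Type u} [SmallCategory D₁] [SmallCategory D₂]
    (J : GrothendieckTopology D₁) (K : GrothendieckTopology D₂)
    (fstar : Sheaf K (Type u) ⥤ Sheaf J (Type u))
    (fsub : Sheaf J (Type u) ⥤ Sheaf K (Type u))
    (adj : fstar ⊣ fsub) [PreservesFiniteLimits fstar]
    (xstar : (Cᵒᵖ ⥤ Type u) ⥤ Sheaf J (Type u))
    (hx : IsPoint.{u} xstar)
    (R : (Cᵒᵖ ⥤ Type u) ⥤ Sheaf K (Type u))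
    (α : yoneda ⋙ xstar ⋙ fsub ⟶ yoneda ⋙ R)
    (hR : (Functor.LeftExtension.mk R α).IsPointwiseLeftKanExtension) :
    IsPoint.{u} R ∧
    ∃ e : ∀ g : (Cᵒᵖ ⥤ Type u) ⥤ Sheaf K (Type u),
        IsPoint.{u} g → (((g ⋙ fstar) ⟶ xstar) ≃ (g ⟶ R)),
      ∀ (g g' : (Cᵒᵖ ⥤ Type u) ⥤ Sheaf K (Type u)) (hg : IsPoint.{u} g)
        (hg' : IsPoint.{u} g') (φ : g' ⟶ g) (β : (g ⋙ fstar) ⟶ xstar),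
        e g' hg' (Functor.whiskerRight φ fstar ≫ β) = φ ≫ e g hg β :=
  statement4_general J K fstar fsub adj xstar hx R α hR
end

section
/- Let C and D be small categories with finite limits. Suppose L ⊣ M ⊣ R is an adjoint triple in which L : (Dᵒᵖ ⥤ Type) ⥤ (Cᵒᵖ ⥤ Type) preserves finite limits (so M : (Cᵒᵖ ⥤ Type) ⥤ (Dᵒᵖ ⥤ Type) and R : (Dᵒᵖ ⥤ Type) ⥤ (Cᵒᵖ ⥤ Type)). Then there exists a functor G : D ⥤ C preserving finite limits such that M is naturally isomorphic to the restriction functor given by precomposition with Gᵒᵖ, and consequently L is naturally isomorphic to the left Kan extension functor along Gᵒᵖ. (Every ethereal geometric morphism between presheaf topoi on small lex categories is induced by a left exact functor between the sites.) -/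
/-!
Write `A := yoneda ⋙ L : D ⥤ (Cᵒᵖ ⥤ Type u)`. By `L ⊣ M`, maps out of `A d` are elements of
`M P` at `d`; since `M` is itself a left adjoint, `Hom(A d, -)` preserves colimits. Writing `A d`
as a colimit of representables, its identity then factors through one of them, so `A d` is a
retract of a representable presheaf, hence representable because finite limits split
idempotents in `C`. This gives `G : D ⥤ C` with `G ⋙ yoneda ≅ A`; it is left exact because
`A` is and `yoneda` reflects limits. Finally `L` and `lan G.op` are cocontinuous and agree on
representables, so they are isomorphic, and their right adjoints `M` and `- ⋙ G.op` agree too.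
-/

universe u

open CategoryTheory Limits

namespace CategoryTheory

open Opposite

theorem isIdempotentComplete_of_hasEqualizers (C : Type*) [Category* C] [HasEqualizers C] :
    IsIdempotentComplete C :=
  (Idempotents.isIdempotentComplete_iff_hasEqualizer_of_id_and_idempotent C).2
    fun _ _ _ => inferInstance

theorem Functor.essImage_of_retract {C E : Type*} [Category* C] [Category* E]
    [IsIdempotentComplete C] (F : C ⥤ E) [F.Full] [F.Faithful] {X : E} {c : C}
    (h : Retract X (F.obj c)) : F.essImage X := by
  let e : c ⟶ c := F.preimage (h.r ≫ h.i)
  have he : F.map e = h.r ≫ h.i := F.map_preimage _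
  have hee : e ≫ e = e := F.map_injective (by simp [he])
  obtain ⟨Y, i, r, hir, hri⟩ := IsIdempotentComplete.idempotents_split c e hee
  have hFri : F.map r ≫ F.map i = h.r ≫ h.i := by rw [← F.map_comp, hri, he]
  refine ⟨Y, ⟨F.map i ≫ h.r, h.i ≫ F.map r, ?_, by simp [reassoc_of% hFri]⟩⟩
  rw [Category.assoc, ← reassoc_of% hFri, ← F.map_comp_assoc, hir, F.map_id,
    Category.id_comp, ← F.map_comp, hir, F.map_id]

variable {C D : Type u} [SmallCategory C] [SmallCategory D]

theorem Presheaf.exists_retract_yoneda_of_preservesColimits_coyoneda (Q : Cᵒᵖ ⥤ Type u)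
    [PreservesColimitsOfSize.{u, u} (coyoneda.obj (op Q))] :
    ∃ c : C, Nonempty (Retract Q (yoneda.obj c)) := by
  obtain ⟨j, s, hs⟩ := Types.jointly_surjective _
    (isColimitOfPreserves (coyoneda.obj (op Q)) (Presheaf.colimitOfRepresentable.{u} Q)) (𝟙 Q)
  exact ⟨_, ⟨(⟨s, _, hs⟩ : Retract Q _).trans (Retract.ofIso (uliftYonedaIsoYoneda.{u}.app _))⟩⟩

theorem Presheaf.yoneda_essImage_of_preservesColimits_coyoneda [IsIdempotentComplete C]
    (Q : Cᵒᵖ ⥤ Type u) [PreservesColimitsOfSize.{u, u} (coyoneda.obj (op Q))] :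
    yoneda.essImage Q := by
  obtain ⟨c, ⟨h⟩⟩ := exists_retract_yoneda_of_preservesColimits_coyoneda Q
  exact yoneda.essImage_of_retract h

theorem Adjunction.preservesColimits_coyoneda_obj_left_obj_yoneda {E : Type*} [Category.{u} E]
    {L : (Dᵒᵖ ⥤ Type u) ⥤ E} {M : E ⥤ (Dᵒᵖ ⥤ Type u)} (adj : L ⊣ M)
    [PreservesColimitsOfSize.{u, u} M] (d : D) :
    PreservesColimitsOfSize.{u, u} (coyoneda.obj (Opposite.op (L.obj (yoneda.obj d)))) :=
  preservesColimits_of_natIso (adj.compCoyonedaIso.app (Opposite.op (yoneda.obj d)) ≪≫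
    Functor.isoWhiskerLeft M (curriedYonedaLemma.app (Opposite.op d))).symm

noncomputable def Presheaf.isoLanOfCompYonedaIso (G : D ⥤ C)
    (L : (Dᵒᵖ ⥤ Type u) ⥤ (Cᵒᵖ ⥤ Type u)) [PreservesColimitsOfSize.{u, u} L]
    (e : G ⋙ yoneda ≅ yoneda ⋙ L) : L ≅ G.op.lan :=
  have : PreservesColimitsOfSize.{u, u} (G.op.lan : (Dᵒᵖ ⥤ Type u) ⥤ _) :=
    (G.op.lanAdjunction (Type u)).leftAdjoint_preservesColimits
  uniqueExtensionAlongULiftYoneda L (Functor.isoWhiskerRight uliftYonedaIsoYoneda.{u} L).symm ≪≫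
    (uniqueExtensionAlongULiftYoneda _ (e.symm ≪≫
      (Functor.isoWhiskerLeft G uliftYonedaIsoYoneda.{u}).symm ≪≫
        compULiftYonedaIsoULiftYonedaCompLan.{u} G)).symm

end CategoryTheory

theorem statement5_general {C D : Type u} [SmallCategory C] [SmallCategory D]
    [HasFiniteLimits C]
    (L : (Dᵒᵖ ⥤ Type u) ⥤ (Cᵒᵖ ⥤ Type u))
    (M : (Cᵒᵖ ⥤ Type u) ⥤ (Dᵒᵖ ⥤ Type u))
    (R : (Dᵒᵖ ⥤ Type u) ⥤ (Cᵒᵖ ⥤ Type u))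
    (adj₁ : L ⊣ M) (adj₂ : M ⊣ R) [PreservesFiniteLimits L] :
    ∃ G : D ⥤ C, Nonempty (PreservesFiniteLimits G) ∧
      Nonempty (M ≅ (Functor.whiskeringLeft Dᵒᵖ Cᵒᵖ (Type u)).obj G.op) ∧
      Nonempty (L ≅ (Functor.lan G.op : (Dᵒᵖ ⥤ Type u) ⥤ (Cᵒᵖ ⥤ Type u))) := by
  have := isIdempotentComplete_of_hasEqualizers C
  have := adj₂.leftAdjoint_preservesColimits
  have := adj₁.leftAdjoint_preservesColimits
  have hrep (d : D) : yoneda.essImage (L.obj (yoneda.obj d)) :=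
    have := adj₁.preservesColimits_coyoneda_obj_left_obj_yoneda d
    Presheaf.yoneda_essImage_of_preservesColimits_coyoneda _
  let G : D ⥤ C := Functor.essImage.liftFunctor (yoneda ⋙ L) yoneda hrep
  let eG : G ⋙ yoneda ≅ yoneda ⋙ L := Functor.essImage.liftFunctorCompIso _ _ hrep
  have hG : PreservesFiniteLimits G :=
    have := preservesFiniteLimits_of_natIso eG.symm
    preservesFiniteLimits_of_reflects_of_preserves G yoneda
  let eL : L ≅ G.op.lan := Presheaf.isoLanOfCompYonedaIso G L eG
  exact ⟨G, ⟨hG⟩, ⟨adj₁.rightAdjointUniq ((G.op.lanAdjunction (Type u)).ofNatIsoLeft eL.symm)⟩,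
    ⟨eL⟩⟩

/-- Every ethereal geometric morphism between presheaf topoi on small lex categories is
induced by a left exact functor between the sites: if `L ⊣ M ⊣ R` is an adjoint triple
between presheaf categories with `L` preserving finite limits, then there is a finite
limit preserving functor `G : D ⥤ C` with `M` isomorphic to precomposition with `Gᵒᵖ`
and `L` isomorphic to left Kan extension along `Gᵒᵖ`. -/
theorem statement5 {C D : Type u} [SmallCategory C] [SmallCategory D]
    [HasFiniteLimits C] [HasFiniteLimits D]
    (L : (Dᵒᵖ ⥤ Type u) ⥤ (Cᵒᵖ ⥤ Type u))
    (M : (Cᵒᵖ ⥤ Type u) ⥤ (Dᵒᵖ ⥤ Type u))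
    (R : (Dᵒᵖ ⥤ Type u) ⥤ (Cᵒᵖ ⥤ Type u))
    (adj₁ : L ⊣ M) (adj₂ : M ⊣ R) [PreservesFiniteLimits L] :
    ∃ G : D ⥤ C, Nonempty (PreservesFiniteLimits G) ∧
      Nonempty (M ≅ (Functor.whiskeringLeft Dᵒᵖ Cᵒᵖ (Type u)).obj G.op) ∧
      Nonempty (L ≅ (Functor.lan G.op : (Dᵒᵖ ⥤ Type u) ⥤ (Cᵒᵖ ⥤ Type u))) :=
  statement5_general L M R adj₁ adj₂
end

section
/- Let E be a Grothendieck topos, X any category, and A a small filtered category. If D : A ⥤ (X ⥤ E) is a diagram such that, for every a in A, the functor D(a) : X ⥤ E preserves finite limits and small colimits, then the colimit of D in the functor category X ⥤ E (computed pointwise) again preserves finite limits and small colimits; hence the full subcategory of X ⥤ E spanned by finite-limit-preserving, small-colimit-preserving functors is closed under filtered colimits. (The category of E-points of any Grothendieck topos has filtered colimits.) -/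
/-!
Writing `colimit D ≅ D.flip ⋙ colim`, it suffices that `D.flip` and `colim` preserve the relevant
(co)limits. Since (co)limits in a functor category are computed pointwise, `D.flip` inherits them
from the functors `D.obj a`; `colim` is a left adjoint, and it preserves finite limits because
filtered colimits in a Grothendieck topos are exact (they are in presheaves of types, and
sheafification is left exact).
-/

universe w v u

open CategoryTheory Limits

section

variable {A : Type*} [Category A] {X : Type*} [Category X] {E : Type*} [Category E]
  [HasColimitsOfShape A E] (D : A ⥤ X ⥤ E)

lemma preservesFiniteLimits_colimit [HasExactColimitsOfShape A E]
    [∀ a, PreservesFiniteLimits (D.obj a)] : PreservesFiniteLimits (colimit D) := by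
  have : PreservesFiniteLimits D.flip := preservesFiniteLimits_of_evaluation _ fun a =>
    preservesFiniteLimits_of_natIso (flipCompEvaluation D a).symm
  exact preservesFiniteLimits_of_natIso (colimitFlipIsoCompColim D.flip).symm

lemma preservesColimitsOfSize_colimit [∀ a, PreservesColimitsOfSize.{w, v} (D.obj a)] :
    PreservesColimitsOfSize.{w, v} (colimit D) := by
  have : PreservesColimitsOfSize.{w, v} D.flip := ⟨fun {S} _ =>
    preservesColimitsOfShape_of_evaluation _ S fun a =>
      preservesColimitsOfShape_of_natIso (flipCompEvaluation D a).symm⟩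
  have : PreservesColimitsOfSize.{w, v} (colim : (A ⥤ E) ⥤ E) :=
    colimConstAdj.leftAdjoint_preservesColimits
  exact preservesColimits_of_natIso (colimitFlipIsoCompColim D.flip).symm

lemma isPoint_colimit [HasExactColimitsOfShape A E] (hD : ∀ a, IsPoint.{u} (D.obj a)) :
    IsPoint.{u} (colimit D) :=
  have := fun a => (hD a).1.some
  have := fun a => (hD a).2.some
  ⟨⟨preservesFiniteLimits_colimit D⟩, ⟨preservesColimitsOfSize_colimit D⟩⟩

end

/-- The category of `E`-points of any Grothendieck topos has filtered colimits: a
pointwise filtered colimit of functors preserving finite limits and small colimits again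
preserves finite limits and small colimits. -/
theorem statement7 {C : Type u} [SmallCategory C] (J : GrothendieckTopology C)
    (X : Type v) [Category.{w} X]
    (A : Type u) [SmallCategory A] [IsFiltered A]
    (D : A ⥤ (X ⥤ Sheaf J (Type u)))
    (hD : ∀ a : A, IsPoint.{u} (D.obj a)) :
    IsPoint.{u} (colimit D) :=
  isPoint_colimit D hD
end

section
/- Let f^* ⊣ f_* be an adjunction with f^* : F ⥤ E fully faithful, and let x^* ⊣ x_* be an adjunction with x^* : X ⥤ E. Suppose g^* : X ⥤ F is a functor equipped with a natural isomorphism f^* ∘ g^* ≅ x^*. Then: (i) g^* is left adjoint to the composite x_* ∘ f^* : F ⥤ X; and (ii) x_* ∘ f^* is a left Kan extension of x_* along f_*, i.e. for every functor K : F ⥤ X, composition with f_* induces a bijection between natural transformations x_* ∘ f^* ⟶ K and natural transformations x_* ⟶ K ∘ f_*. (Right Kan extensions of points of a topos along connected geometric morphisms exist, are pointwise, and have direct image x_* ∘ f^*.) -/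
universe w₁ w₂ w₃ v₁ v₂ v₃

/-!
Restricting `x^* ⊣ x_*` along the fully faithful `f^*` gives `g^* ⊣ f^* ⋙ x_*`. Composing with
`f^* ⊣ f_*`, both `x_*` and `f_* ⋙ (f^* ⋙ x_*)` are right adjoint to `x^* ≅ g^* ⋙ f^*`, hence
isomorphic. As the left adjoint of `f_*` is fully faithful, `f_*` is a localization, so
precomposition with `f_*` is fully faithful; then any `K` with `x_* ≅ f_* ⋙ K` is a left Kan
extension of `x_*` along `f_*`.
-/

open CategoryTheory

namespace CategoryTheory

variable {C D H : Type*} [Category C] [Category D] [Category H]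

lemma Functor.isLeftKanExtension_of_iso_of_fullyFaithful_whiskeringLeft {L : C ⥤ D}
    (hL : ((Functor.whiskeringLeft C D H).obj L).FullyFaithful) {F : C ⥤ H} (F' : D ⥤ H)
    (α : F ≅ L ⋙ F') : F'.IsLeftKanExtension α.hom := by
  refine ⟨⟨Limits.IsInitial.ofUniqueHom (fun Y => StructuredArrow.homMk ?_ ?_) fun Y φ => ?_⟩⟩
  · exact hL.preimage (α.inv ≫ Y.hom)
  · have h : whiskerLeft L (hL.preimage (α.inv ≫ Y.hom)) = α.inv ≫ Y.hom := hL.map_preimage _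
    exact (congrArg (α.hom ≫ ·) h).trans (α.hom_inv_id_assoc _)
  · refine StructuredArrow.hom_ext _ _ (hL.map_injective ?_)
    have h : α.hom ≫ whiskerLeft L φ.right = Y.hom := StructuredArrow.w φ
    have h' : whiskerLeft L (hL.preimage (α.inv ≫ Y.hom)) = α.inv ≫ Y.hom := hL.map_preimage _
    exact (α.eq_inv_comp.mpr h).trans h'.symm

noncomputable def Adjunction.fullyFaithfulWhiskeringLeftRight {L : D ⥤ C} {R : C ⥤ D}
    (adj : L ⊣ R) [L.Full] [L.Faithful] (H : Type*) [Category H] :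
    ((Functor.whiskeringLeft C D H).obj R).FullyFaithful :=
  have := adj.isLocalization'
  Localization.fullyFaithfulWhiskeringLeft R ((MorphismProperty.isomorphisms D).inverseImage R) H

end CategoryTheory

/-- Right Kan extensions of points of a topos along connected geometric morphisms exist,
are pointwise, and have direct image `x_* ∘ f^*`: if `f^* ⊣ f_*` with `f^*` fully
faithful, `x^* ⊣ x_*`, and `g^*` satisfies `f^* ∘ g^* ≅ x^*`, then (i) `g^*` is left
adjoint to `x_* ∘ f^*`, and (ii) `x_* ∘ f^*` is a left Kan extension of `x_*` along
`f_*`. -/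
theorem statement8 {E : Type v₁} [Category.{w₁} E] {F : Type v₂} [Category.{w₂} F]
    {X : Type v₃} [Category.{w₃} X]
    (fstar : F ⥤ E) (fsub : E ⥤ F) (fadj : fstar ⊣ fsub)
    [fstar.Full] [fstar.Faithful]
    (xstar : X ⥤ E) (xsub : E ⥤ X) (xadj : xstar ⊣ xsub)
    (gstar : X ⥤ F) (i : gstar ⋙ fstar ≅ xstar) :
    Nonempty (gstar ⊣ fstar ⋙ xsub) ∧
    ∃ α : xsub ⟶ fsub ⋙ (fstar ⋙ xsub), (fstar ⋙ xsub).IsLeftKanExtension α := by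
  let gadj : gstar ⊣ fstar ⋙ xsub :=
    xadj.restrictFullyFaithful (.id X) (.ofFullyFaithful fstar)
      (xstar.leftUnitor ≪≫ i.symm) (fstar ⋙ xsub).rightUnitor.symm
  let α : xsub ≅ fsub ⋙ (fstar ⋙ xsub) :=
    xadj.rightAdjointUniq ((gadj.comp fadj).ofNatIsoLeft i)
  exact ⟨⟨gadj⟩, α.hom, Functor.isLeftKanExtension_of_iso_of_fullyFaithful_whiskeringLeft
    (fadj.fullyFaithfulWhiskeringLeftRight X) _ α⟩
end

section
/- Let C be a small category and D a cosieve in C, i.e. a set of objects such that whenever d ∈ D and there exists a morphism d ⟶ c, then c ∈ D. For each object c of C let J(c) be the set of sieves S on c such that S contains every morphism g : d ⟶ c with d ∈ D. Then J is a Grothendieck topology on C, and restriction of presheaves along the inclusion of the full subcategory on D induces an equivalence of categories between the category Sheaf J (Type) of J-sheaves of types and the presheaf category Dᵒᵖ ⥤ Type. (The classifying topoi of essentially algebraic theories with falsum are exactly the closed subtopoi of free topoi, presented by cosieves.) -/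
/-!
The inclusion `ι` of the full subcategory on `D` is cover-dense for `J`, since every arrow out of
an object of `D` factors through `ι` trivially. The topology that `J` induces on `D` is the trivial
one: a sieve on `d ∈ D` whose image contains `𝟙 d` already contains `𝟙 d`, because `ι` is full.
The comparison lemma then identifies `J`-sheaves with sheaves for the trivial topology on `D`,
which are all presheaves on `D`.
-/

universe u

open CategoryTheory

namespace CategoryTheory

variable {C : Type*} [Category* C] (P : ObjectProperty C)

def GrothendieckTopology.ofObjects : GrothendieckTopology C where
  sieves c := {S | ∀ (d : C) (g : d ⟶ c), P d → S g}
  top_mem' _ _ _ _ := ⟨⟩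
  pullback_stable' _ _ _ f hS d g hd := hS d (g ≫ f) hd
  transitive' _ _ hS _ hR d g hd := by
    simpa using hR (hS d g hd) d (𝟙 d) hd

namespace GrothendieckTopology

variable {P}

theorem mem_ofObjects_iff {c : C} {S : Sieve c} :
    S ∈ ofObjects P c ↔ ∀ (d : C) (g : d ⟶ c), P d → S g := Iff.rfl

theorem functorPushforward_ι_mem_ofObjects_iff {d : P.FullSubcategory} {S : Sieve d} :
    S.functorPushforward P.ι ∈ ofObjects P d.obj ↔ S = ⊤ := by
  constructor
  · intro hS
    obtain ⟨d', g, h, hg, hid⟩ := hS d.obj (𝟙 d.obj) d.property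
    have hid' : (ObjectProperty.homMk h : d ⟶ d') ≫ g = 𝟙 d := by
      ext
      simpa using hid.symm
    rw [← Sieve.id_mem_iff_eq_top, ← hid']
    exact S.downward_closed hg _
  · rintro rfl
    rw [Sieve.functorPushforward_top]
    exact (ofObjects P).top_mem _

end GrothendieckTopology

open GrothendieckTopology

namespace ObjectProperty

instance isCoverDense_ι_ofObjects : P.ι.IsCoverDense (ofObjects P) where
  is_cover _ d g hd := ⟨⟨⟨d, hd⟩, 𝟙 d, g, Category.id_comp g⟩⟩

instance isDenseSubsite_ι_bot_ofObjects : P.ι.IsDenseSubsite ⊥ (ofObjects P) where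
  functorPushforward_mem_iff := functorPushforward_ι_mem_ofObjects_iff.trans bot_covering.symm

theorem isEquivalence_sheafToPresheaf_ofObjects_comp_restrict
    (A : Type*) [Category* A] [∀ c, Limits.HasLimitsOfShape (StructuredArrow c P.ι.op) A] :
    (sheafToPresheaf (ofObjects P) A ⋙ (Functor.whiskeringLeft _ _ A).obj P.ι.op).IsEquivalence :=
  have : (sheafToPresheaf (⊥ : GrothendieckTopology P.FullSubcategory) A).IsEquivalence :=
    (sheafBotEquivalence A).isEquivalence_functor
  Functor.isEquivalence_of_iso (P.ι.sheafPushforwardContinuousCompSheafToPresheafIso A ⊥ _)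

end ObjectProperty

end CategoryTheory

theorem statement9_general (C : Type u) [SmallCategory C] (D : Set C) :
    ∃ J : GrothendieckTopology C,
      (∀ (c : C) (S : Sieve c), S ∈ J c ↔ ∀ (d : C) (g : d ⟶ c), d ∈ D → S g) ∧
      (sheafToPresheaf J (Type u) ⋙
        (Functor.whiskeringLeft (ObjectProperty.FullSubcategory fun c => c ∈ D)ᵒᵖ Cᵒᵖ (Type u)).obj
          (ObjectProperty.ι fun c => c ∈ D).op).IsEquivalence :=
  ⟨GrothendieckTopology.ofObjects (· ∈ D), fun _ _ => GrothendieckTopology.mem_ofObjects_iff,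
    ObjectProperty.isEquivalence_sheafToPresheaf_ofObjects_comp_restrict _ _⟩

/-- Classifying topoi of essentially algebraic theories with falsum are the closed
subtopoi of free topoi presented by cosieves: given a cosieve `D` in a small category
`C`, the sieves containing all morphisms out of objects of `D` form a Grothendieck
topology `J`, and restriction along the inclusion of the full subcategory on `D` induces
an equivalence between `J`-sheaves of types and presheaves of types on `D`. -/
theorem statement9 (C : Type u) [SmallCategory C] (D : Set C)
    (hD : ∀ {d c : C}, d ∈ D → (d ⟶ c) → c ∈ D) :
    ∃ J : GrothendieckTopology C,
      (∀ (c : C) (S : Sieve c), S ∈ J c ↔ ∀ (d : C) (g : d ⟶ c), d ∈ D → S g) ∧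
      (sheafToPresheaf J (Type u) ⋙
        (Functor.whiskeringLeft (ObjectProperty.FullSubcategory fun c => c ∈ D)ᵒᵖ Cᵒᵖ (Type u)).obj
          (ObjectProperty.ι fun c => c ∈ D).op).IsEquivalence :=
  statement9_general C D
end

section
/- Let C be a small category, K a Grothendieck topology on C, and ŷ : C ⥤ Sheaf K (Type) the composite of the Yoneda embedding with sheafification. Let D := { c ∈ C | ŷ(c) is not an initial object of Sheaf K (Type) }. Then: (i) D is a cosieve in C (if d ∈ D and there is a morphism d ⟶ c, then c ∈ D); (ii) every K-sheaf, regarded as a presheaf on C, is a sheaf for the topology J_D in which a sieve on c is covering iff it contains every morphism from an object of D; equivalently, for every K-sheaf F and every c ∉ D the set F(c) is a singleton; (iii) for the initial object ⊥ of Sheaf K (Type) and every d ∈ D, the set (underlying presheaf of ⊥)(d) is empty. (Hence the inclusion of any subtopos of a presheaf topos factors as a dominant embedding into the classifying topos of an essentially algebraic theory with falsum.) -/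
/-!
Initial objects of a sheaf topos are strict. Hence if `ŷ c` is initial and `d ⟶ c`, the
induced map `ŷ d ⟶ ŷ c` forces `ŷ d` to be initial, and a section of the initial sheaf over
`d`, which is a map `ŷ d ⟶ ⊥` by Yoneda and the sheafification adjunction, forces the same.
Outside `D` every sheaf `F` has `F(c) ≃ (ŷ c ⟶ F)` a singleton. A `J_D`-covering sieve on an
object of `D` contains the identity, and one on an object outside `D` only sees singletons,
so every `K`-sheaf satisfies the `J_D` sheaf condition.
-/

universe u v w

open CategoryTheory Limits Opposite

/-- The Grothendieck topology associated to a set of objects `D` of `C`, in which a sieve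
on `c` is covering iff it contains every morphism from an object of `D`. (When `D` is a
cosieve, this presents the closed complement of `D` in the presheaf topos on `C`.) -/
def cosieveTopology (C : Type u) [SmallCategory C] (D : Set C) :
    GrothendieckTopology C where
  sieves c := {S | ∀ (d : C) (g : d ⟶ c), d ∈ D → S g}
  top_mem' := fun _ _ _ _ => trivial
  pullback_stable' := fun _ _ S f hS d g hd => hS d (g ≫ f) hd
  transitive' := fun _ S hS R hR d g hd => by
    simpa using hR (hS d g hd) d (𝟙 d) hd

theorem isSheaf_cosieveTopology_of_unique {C : Type u} [SmallCategory C] {D : Set C}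
    (hD : ∀ {d c : C}, d ∈ D → (d ⟶ c) → c ∈ D) (P : Cᵒᵖ ⥤ Type w)
    (hP : ∀ c ∉ D, Nonempty (Unique (P.obj (op c)))) :
    Presheaf.IsSheaf (cosieveTopology C D) P := by
  rw [isSheaf_iff_isSheaf_of_type]
  intro c S hS
  by_cases hc : c ∈ D
  · rw [Sieve.id_mem_iff_eq_top.mp (hS c (𝟙 c) hc)]
    exact Presieve.isSheafFor_top P
  · have hunique_over {e : C} (g : e ⟶ c) : Nonempty (Unique (P.obj (op e))) :=
      hP e fun he => hc (hD he g)
    obtain ⟨_⟩ := hP c hc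
    intro x _
    refine ⟨default, fun _ g _ => ?_, fun _ _ => Subsingleton.elim _ _⟩
    obtain ⟨_⟩ := hunique_over g
    exact Subsingleton.elim _ _

namespace CategoryTheory

variable {C : Type u} [Category.{v} C] (J : GrothendieckTopology C) [HasSheafify J (Type v)]

noncomputable def sheafifiedYonedaEquiv (c : C) (F : Sheaf J (Type v)) :
    ((presheafToSheaf J (Type v)).obj (yoneda.obj c) ⟶ F) ≃ F.obj.obj (op c) :=
  ((sheafificationAdjunction J (Type v)).homEquiv _ _).trans yonedaEquiv

variable {J}

namespace Limits.IsInitial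

noncomputable def sheafifiedYonedaOfHom {c d : C} (f : d ⟶ c)
    (h : IsInitial ((presheafToSheaf J (Type v)).obj (yoneda.obj c))) :
    IsInitial ((presheafToSheaf J (Type v)).obj (yoneda.obj d)) :=
  .ofStrict ((presheafToSheaf J (Type v)).map (yoneda.map f)) h

noncomputable def sheafifiedYonedaOfSection {Z : Sheaf J (Type v)} (hZ : IsInitial Z)
    {d : C} (z : Z.obj.obj (Opposite.op d)) :
    IsInitial ((presheafToSheaf J (Type v)).obj (yoneda.obj d)) :=
  .ofStrict ((sheafifiedYonedaEquiv J d Z).symm z) hZ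

theorem nonempty_unique_sheaf_obj {c : C}
    (h : IsInitial ((presheafToSheaf J (Type v)).obj (yoneda.obj c))) (F : Sheaf J (Type v)) :
    Nonempty (Unique (F.obj.obj (Opposite.op c))) :=
  have : Unique ((presheafToSheaf J (Type v)).obj (yoneda.obj c) ⟶ F) :=
    ⟨⟨h.to F⟩, fun _ => h.hom_ext _ _⟩
  ⟨(sheafifiedYonedaEquiv J c F).symm.unique⟩

end Limits.IsInitial

end CategoryTheory

/-- The inclusion of any subtopos of a presheaf topos factors as a dominant embedding
into the classifying topos of an essentially algebraic theory with falsum: with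
`D = {c | ŷ(c) is not initial}` for the sheafified Yoneda embedding `ŷ`, (i) `D` is a
cosieve; (ii) every `K`-sheaf is a sheaf for the cosieve topology `J_D`, equivalently it
takes singleton values outside `D`; (iii) the initial sheaf is empty on `D`. -/
theorem statement10 {C : Type u} [SmallCategory C] (K : GrothendieckTopology C)
    (D : Set C)
    (hDdef : D =
      {c | ¬ Nonempty (IsInitial ((presheafToSheaf K (Type u)).obj (yoneda.obj c)))}) :
    (∀ {d c : C}, d ∈ D → (d ⟶ c) → c ∈ D) ∧
    (∀ F : Sheaf K (Type u), Presheaf.IsSheaf (cosieveTopology C D) F.val) ∧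
    (∀ (F : Sheaf K (Type u)) (c : C), c ∉ D →
      Nonempty (Unique (F.val.obj (op c)))) ∧
    (∀ (Z : Sheaf K (Type u)), IsInitial Z →
      ∀ d ∈ D, IsEmpty (Z.val.obj (op d))) := by
  have hcosieve : ∀ {d c : C}, d ∈ D → (d ⟶ c) → c ∈ D := by
    rw [hDdef]
    exact fun hd f hc => hd (hc.map (·.sheafifiedYonedaOfHom f))
  have hunique (F : Sheaf K (Type u)) (c : C) (hc : c ∉ D) :
      Nonempty (Unique (F.obj.obj (op c))) := by
    rw [hDdef, Set.notMem_ofPred_iff, not_not] at hc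
    exact hc.some.nonempty_unique_sheaf_obj F
  refine ⟨hcosieve, fun F => isSheaf_cosieveTopology_of_unique hcosieve F.obj (hunique F),
    hunique, fun Z hZ d hd => ⟨fun z => ?_⟩⟩
  rw [hDdef] at hd
  exact hd ⟨hZ.sheafifiedYonedaOfSection z⟩
end

section
/- Let C be a small category, D a cosieve in C, and J_D the Grothendieck topology in which a sieve on c is covering iff it contains every morphism from an object of D; write ŷ : C ⥤ Sheaf J_D (Type) for the sheafified Yoneda embedding. Let E and F be Grothendieck topoi, f^* ⊣ f_* an adjunction with f^* : F ⥤ E preserving finite limits and with f_* preserving initial objects (a dominant geometric morphism), and let x^* : Sheaf J_D (Type) ⥤ E preserve finite limits and small colimits. Then for every object c ∉ D, the object f_*(x^*(ŷ(c))) is initial in F. (Key step showing that classifying topoi of essentially algebraic theories with falsum are weakly right Kan injective with respect to dominant geometric morphisms.) -/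
universe u

open CategoryTheory Limits Opposite

/-- Maps out of `ŷ c` are sections at `c`, and these are unique because every sheaf is
terminal at an object covered by the empty sieve. -/
noncomputable def isInitialSheafifyYonedaOfBotCover {C : Type u} [SmallCategory C]
    {J : GrothendieckTopology C} {c : C} (h : ⊥ ∈ J c) :
    IsInitial ((presheafToSheaf J (Type u)).obj (yoneda.obj c)) :=
  @IsInitial.ofUnique _ _ _ fun F =>
    @Equiv.unique _ (F.obj.obj (op c))
      (Types.isTerminalEquivUnique _ (Sheaf.isTerminalOfBotCover F c h))
      (((sheafificationAdjunction J (Type u)).homEquiv _ _).trans yonedaEquiv)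

theorem bot_mem_cosieveTopology {C : Type u} [SmallCategory C] {D : Set C}
    (hD : ∀ {d c : C}, d ∈ D → (d ⟶ c) → c ∈ D) {c : C} (hc : c ∉ D) :
    ⊥ ∈ cosieveTopology C D c :=
  fun _ g hd => hc (hD hd g)

theorem statement11_general {C : Type u} [SmallCategory C] (D : Set C)
    (hD : ∀ {d c : C}, d ∈ D → (d ⟶ c) → c ∈ D)
    {D₁ D₂ : Type u} [SmallCategory D₁] [SmallCategory D₂]
    (J : GrothendieckTopology D₁) (K : GrothendieckTopology D₂)
    (fsub : Sheaf J (Type u) ⥤ Sheaf K (Type u))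
    (hdom : ∀ Z : Sheaf J (Type u), IsInitial Z → Nonempty (IsInitial (fsub.obj Z)))
    (xstar : Sheaf (cosieveTopology C D) (Type u) ⥤ Sheaf J (Type u))
    [PreservesColimitsOfSize.{u, u} xstar]
    (c : C) (hc : c ∉ D) :
    Nonempty (IsInitial (fsub.obj (xstar.obj
      ((presheafToSheaf (cosieveTopology C D) (Type u)).obj (yoneda.obj c))))) :=
  hdom _ ((isInitialSheafifyYonedaOfBotCover (bot_mem_cosieveTopology hD hc)).isInitialObj xstar _)

/-- Classifying topoi of essentially algebraic theories with falsum are weakly right Kan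
injective with respect to dominant geometric morphisms (key step): if `D` is a cosieve in
`C`, `f^* ⊣ f_*` a dominant geometric morphism (`f_*` preserves initial objects), and
`x^*` a point of `Sh(C, J_D)` in `E`, then `f_*(x^*(ŷ c))` is initial for every
`c ∉ D`. -/
theorem statement11 {C : Type u} [SmallCategory C] (D : Set C)
    (hD : ∀ {d c : C}, d ∈ D → (d ⟶ c) → c ∈ D)
    {D₁ D₂ : Type u} [SmallCategory D₁] [SmallCategory D₂]
    (J : GrothendieckTopology D₁) (K : GrothendieckTopology D₂)
    (fstar : Sheaf K (Type u) ⥤ Sheaf J (Type u))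
    (fsub : Sheaf J (Type u) ⥤ Sheaf K (Type u))
    (adj : fstar ⊣ fsub) [PreservesFiniteLimits fstar]
    (hdom : ∀ Z : Sheaf J (Type u), IsInitial Z → Nonempty (IsInitial (fsub.obj Z)))
    (xstar : Sheaf (cosieveTopology C D) (Type u) ⥤ Sheaf J (Type u))
    [PreservesFiniteLimits xstar] [PreservesColimitsOfSize.{u, u} xstar]
    (c : C) (hc : c ∉ D) :
    Nonempty (IsInitial (fsub.obj (xstar.obj
      ((presheafToSheaf (cosieveTopology C D) (Type u)).obj (yoneda.obj c))))) :=
  statement11_general D hD J K fsub hdom xstar c hc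
end

section
/- Let C be a category with finite limits satisfying Preregular (so the regular topology on C is defined, generated by single effective epimorphisms), and let ŷ : C ⥤ Sheaf (regularTopology C) (Type) be the sheafified Yoneda embedding. Let E and F be Grothendieck topoi, f^* ⊣ f_* an adjunction with f^* : F ⥤ E preserving finite limits and f_* : E ⥤ F preserving epimorphisms (a matte geometric morphism), and let x^* : Sheaf (regularTopology C) (Type) ⥤ E preserve finite limits and small colimits. Then the composite f_* ∘ x^* ∘ ŷ : C ⥤ F sends every effective epimorphism of C to an epimorphism of F. (Regular topoi are formally regular: this is the continuity step showing they are weakly right Kan injective with respect to matte geometric morphisms, with the presheaf topos as presentation.) -/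
universe u

open CategoryTheory Limits

/-!
An effective epimorphism `q` becomes locally surjective under Yoneda, since in a preregular
category every map into its codomain factors through `q` after an effective epimorphic
refinement; so `ŷ q` is an epimorphism of sheaves. The colimit-preserving `x^*` preserves
epimorphisms (they are detected by pushouts), and the matte `f_*` preserves them by assumption.
-/

lemma regularTopology.isLocallySurjective_yoneda_map {C : Type*} [Category* C] [Preregular C]
    {A B : C} (q : A ⟶ B) [EffectiveEpi q] :
    Presheaf.IsLocallySurjective (regularTopology C) (yoneda.map q) := by
  rw [regularTopology.isLocallySurjective_iff]
  exact fun _ y ↦ Preregular.exists_fac y q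

lemma regularTopology.epi_presheafToSheaf_map_yoneda_map {C : Type u} [SmallCategory C]
    [Preregular C] {A B : C} (q : A ⟶ B) [EffectiveEpi q] :
    Epi ((presheafToSheaf (regularTopology C) (Type u)).map (yoneda.map q)) := by
  have : Sheaf.IsLocallySurjective
      ((presheafToSheaf (regularTopology C) (Type u)).map (yoneda.map q)) := by
    rw [Presheaf.isLocallySurjective_presheafToSheaf_map_iff]
    exact regularTopology.isLocallySurjective_yoneda_map q
  exact Sheaf.epi_of_isLocallySurjective _

theorem statement12_general {C : Type u} [SmallCategory C] [Preregular C]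
    {D₁ D₂ : Type u} [SmallCategory D₁] [SmallCategory D₂]
    (J : GrothendieckTopology D₁) (K : GrothendieckTopology D₂)
    (fsub : Sheaf J (Type u) ⥤ Sheaf K (Type u))
    [fsub.PreservesEpimorphisms]
    (xstar : Sheaf (regularTopology C) (Type u) ⥤ Sheaf J (Type u))
    [PreservesColimitsOfSize.{u, u} xstar]
    {A B : C} (q : A ⟶ B) (hq : EffectiveEpi q) :
    Epi (((yoneda ⋙ presheafToSheaf (regularTopology C) (Type u)) ⋙
      xstar ⋙ fsub).map q) := by
  -- `WalkingSpan` lives in `Type`, so pushout preservation comes from colimits of size `0`.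
  have : PreservesColimitsOfSize.{0, 0} xstar := preservesColimitsOfSize_shrink xstar
  have := regularTopology.epi_presheafToSheaf_map_yoneda_map q
  have := xstar.map_epi ((presheafToSheaf (regularTopology C) (Type u)).map (yoneda.map q))
  exact fsub.map_epi
    (xstar.map ((presheafToSheaf (regularTopology C) (Type u)).map (yoneda.map q)))

/-- Regular topoi are formally regular (continuity step): if `f^* ⊣ f_*` is a matte
geometric morphism (`f_*` preserves epimorphisms) and `x^*` is a point of the regular
topos `Sh(C, regularTopology C)` in `E`, then the composite `f_* ∘ x^* ∘ ŷ : C ⥤ F`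
sends every effective epimorphism of `C` to an epimorphism of `F`. -/
theorem statement12 {C : Type u} [SmallCategory C] [HasFiniteLimits C] [Preregular C]
    {D₁ D₂ : Type u} [SmallCategory D₁] [SmallCategory D₂]
    (J : GrothendieckTopology D₁) (K : GrothendieckTopology D₂)
    (fstar : Sheaf K (Type u) ⥤ Sheaf J (Type u))
    (fsub : Sheaf J (Type u) ⥤ Sheaf K (Type u))
    (adj : fstar ⊣ fsub) [PreservesFiniteLimits fstar] [fsub.PreservesEpimorphisms]
    (xstar : Sheaf (regularTopology C) (Type u) ⥤ Sheaf J (Type u))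
    [PreservesFiniteLimits xstar] [PreservesColimitsOfSize.{u, u} xstar]
    {A B : C} (q : A ⟶ B) (hq : EffectiveEpi q) :
    Epi (((yoneda ⋙ presheafToSheaf (regularTopology C) (Type u)) ⋙
      xstar ⋙ fsub).map q) :=
  statement12_general J K fsub xstar q hq
end

section
/- For any group G, the category of G-sets (functors from the one-object groupoid SingleObj G to Type) is grouplike: for every small site (D,K) and every pair of functors P, Q : (SingleObj G ⥤ Type) ⥤ Sheaf K (Type) preserving finite limits and small colimits, every natural transformation P ⟶ Q is an isomorphism. -/
universe u

open CategoryTheory Limits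

/-- A category `𝒞` is grouplike if for every small site `(D, K)` and every pair of
functors `P Q : 𝒞 ⥤ Sheaf K (Type u)` preserving finite limits and small colimits, every
natural transformation `P ⟶ Q` is an isomorphism. -/
def Grouplike (𝒞 : Type*) [Category 𝒞] : Prop :=
  ∀ (D : Type u) (_ : SmallCategory D) (K : GrothendieckTopology D)
    (P Q : 𝒞 ⥤ Sheaf K (Type u)),
    Nonempty (PreservesFiniteLimits P) → Nonempty (PreservesColimitsOfSize.{u, u} P) →
    Nonempty (PreservesFiniteLimits Q) → Nonempty (PreservesColimitsOfSize.{u, u} Q) →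
    ∀ τ : P ⟶ Q, IsIso τ

/-!
Write `R` for `G` acting on itself by left multiplication and `Γ` for the set `G` with the
trivial action. Both functors preserve the terminal object and coproducts, so `τ` is invertible
at `1` and at `Γ = ∐_G 1`. The shear `(x, y) ↦ (x, x⁻¹ y)` is an isomorphism `R × R ≅ R × Γ`
over the first projection; after applying `P` and `Q` it makes `P R` and `Q R` torsors under
`P Γ ≅ Q Γ`, with `τ_R` a morphism of torsors. Hence `τ_R` is mono (two sections with the same
image differ by a section of `P Γ` that `τ_Γ` sends to `1`), and it is epi: `P R → 1` is epi
because `R → 1` is, so locally every section `b` of `Q R` can be written as `τ_R a · γ`.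
Sheaf categories are balanced, so `τ_R` is invertible, and since every `G`-set is a colimit of
copies of `R` (density of corepresentables), so is `τ`.
-/

open MonoidalCategory CartesianMonoidalCategory Opposite

namespace CategoryTheory

instance {C : Type*} [Category C] : (coyoneda (C := C)).IsDense :=
  .of_iso Coyoneda.opIso

noncomputable def Limits.Types.isColimitCofanPUnit (X : Type u) :
    IsColimit (Cofan.mk X fun x : X => (↾fun _ : PUnit.{u + 1} => x)) :=
  ((Cofan.nonempty_isColimit_iff_bijective_fromSigma _).2
    ⟨by rintro ⟨x, ⟨⟩⟩ ⟨y, ⟨⟩⟩ (rfl : x = y); rfl, fun x => ⟨⟨x, ⟨⟩⟩, rfl⟩⟩).some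

namespace NatTrans

section

variable {D E : Type*} [Category D] [Category E] {P Q : D ⥤ E} (τ : P ⟶ Q)

lemma isIso_app_coconePt_of_isIso_app {J : Type*} [Category J] {F : J ⥤ D} {c : Cocone F}
    (hc : IsColimit c) [PreservesColimit F P] [PreservesColimit F Q]
    (h : ∀ j, IsIso (τ.app (F.obj j))) : IsIso (τ.app c.pt) := by
  have : ∀ j, IsIso ((Functor.whiskerLeft F τ).app j) := h
  have := NatIso.isIso_of_isIso_app (Functor.whiskerLeft F τ)
  exact isIso_app_coconePt_of_preservesColimit F τ c hc

lemma isIso_of_isIso_app_of_isDense {C : Type*} [Category C] (F : C ⥤ D) [F.IsDense]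
    [∀ Y, PreservesColimitsOfShape (CostructuredArrow F Y) P]
    [∀ Y, PreservesColimitsOfShape (CostructuredArrow F Y) Q]
    (h : ∀ X, IsIso (τ.app (F.obj X))) : IsIso τ := by
  have (Y : D) : IsIso (τ.app Y) :=
    isIso_app_coconePt_of_isIso_app τ (F.denseAt Y) fun j => h j.left
  exact NatIso.isIso_of_isIso_app τ

lemma isIso_app_of_isTerminal {X : D} (hX : IsTerminal X)
    [PreservesLimit (Functor.empty.{0} D) P] [PreservesLimit (Functor.empty.{0} D) Q] :
    IsIso (τ.app X) :=
  ⟨(hX.isTerminalObj P).from _, (hX.isTerminalObj P).hom_ext _ _,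
    (hX.isTerminalObj Q).hom_ext _ _⟩

end

lemma isIso_app_const {C E : Type*} [Category C] [Category E] {P Q : (C ⥤ Type u) ⥤ E}
    (τ : P ⟶ Q) (X : Type u) [PreservesColimitsOfShape (Discrete X) P]
    [PreservesColimitsOfShape (Discrete X) Q]
    (h : IsIso (τ.app ((Functor.const C).obj PUnit))) :
    IsIso (τ.app ((Functor.const C).obj X)) :=
  isIso_app_coconePt_of_isIso_app τ
    (isColimitOfPreserves (Functor.const C) (Types.isColimitCofanPUnit X)) fun _ => h

end NatTrans

variable {C E : Type*} [Category C] [CartesianMonoidalCategory C] [Category E]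

namespace Functor

variable (F : C ⥤ E) [PreservesLimitsOfShape (Discrete WalkingPair) F]

noncomputable def isLimitBinaryFanMapFstSnd (A B : C) :
    IsLimit (BinaryFan.mk (F.map (fst A B)) (F.map (snd A B))) :=
  isLimitMapConeBinaryFanEquiv F _ _ (isLimitOfPreserves F (tensorProductIsBinaryProduct A B))

variable {A B : C} {W : E}

lemma exists_map_tensor_lift (f : W ⟶ F.obj A) (g : W ⟶ F.obj B) :
    ∃ h : W ⟶ F.obj (A ⊗ B), h ≫ F.map (fst A B) = f ∧ h ≫ F.map (snd A B) = g :=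
  ⟨_, (BinaryFan.IsLimit.lift' (F.isLimitBinaryFanMapFstSnd A B) f g).2⟩

lemma map_tensor_hom_ext {f g : W ⟶ F.obj (A ⊗ B)}
    (h₁ : f ≫ F.map (fst A B) = g ≫ F.map (fst A B))
    (h₂ : f ≫ F.map (snd A B) = g ≫ F.map (snd A B)) : f = g :=
  BinaryFan.IsLimit.hom_ext (F.isLimitBinaryFanMapFstSnd A B) h₁ h₂

end Functor

namespace NatTrans

variable {P Q : C ⥤ E} [PreservesLimitsOfShape (Discrete WalkingPair) P]
  [PreservesLimitsOfShape (Discrete WalkingPair) Q] (τ : P ⟶ Q) {X Y : C}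

lemma mono_app_of_isIso_lift_fst (δ : X ⊗ X ⟶ Y) [IsIso (lift (fst X X) δ)]
    [Mono (τ.app Y)] : Mono (τ.app X) := by
  refine ⟨fun {S} u v huv => ?_⟩
  obtain ⟨w₁, hw₁, hw₁'⟩ := P.exists_map_tensor_lift u v
  obtain ⟨w₂, hw₂, hw₂'⟩ := P.exists_map_tensor_lift u u
  have hτ : w₁ ≫ τ.app (X ⊗ X) = w₂ ≫ τ.app (X ⊗ X) := by
    apply Q.map_tensor_hom_ext <;>
      simp only [Category.assoc, ← τ.naturality, reassoc_of% hw₁, reassoc_of% hw₁',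
        reassoc_of% hw₂, reassoc_of% hw₂', huv]
  have hδ : w₁ ≫ P.map δ = w₂ ≫ P.map δ := by
    rw [← cancel_mono (τ.app Y)]
    simp only [Category.assoc, τ.naturality, reassoc_of% hτ]
  have hw : w₁ = w₂ := by
    rw [← cancel_mono (P.map (lift (fst X X) δ))]
    apply P.map_tensor_hom_ext <;>
      simp only [Category.assoc, ← P.map_comp, lift_fst, lift_snd, hw₁, hw₂, hδ]
  rw [← hw₁', ← hw₂', hw]

lemma exists_comp_app_eq_of_isIso_lift_fst (δ : X ⊗ X ⟶ Y) [IsIso (lift (fst X X) δ)]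
    [IsIso (τ.app Y)] {W : E} (a : W ⟶ P.obj X) (b : W ⟶ Q.obj X) :
    ∃ z : W ⟶ P.obj X, z ≫ τ.app X = b := by
  let s := lift (fst X X) δ
  obtain ⟨m, hm, hm'⟩ := Q.exists_map_tensor_lift (a ≫ τ.app X) b
  obtain ⟨ℓ, hℓ, hℓ'⟩ := P.exists_map_tensor_lift a (m ≫ Q.map δ ≫ inv (τ.app Y))
  have hℓτ : ℓ ≫ τ.app (X ⊗ Y) = m ≫ Q.map s := by
    apply Q.map_tensor_hom_ext <;>
      simp only [Category.assoc, ← τ.naturality, reassoc_of% hℓ, reassoc_of% hℓ', ← Q.map_comp,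
        s, lift_fst, lift_snd, hm, IsIso.inv_hom_id, Category.comp_id]
  refine ⟨ℓ ≫ P.map (inv s ≫ snd X X), ?_⟩
  rw [Category.assoc, τ.naturality, reassoc_of% hℓτ, Q.map_comp, ← Q.map_comp_assoc,
    IsIso.hom_inv_id, Q.map_id, Category.id_comp, hm']

lemma epi_app_of_isIso_lift_fst (δ : X ⊗ X ⟶ Y) [IsIso (lift (fst X X) δ)]
    [IsIso (τ.app Y)] {W : E} (a : W ⟶ P.obj X) (b : W ⟶ Q.obj X) [Epi b] :
    Epi (τ.app X) :=
  have ⟨_, hz⟩ := exists_comp_app_eq_of_isIso_lift_fst τ δ a b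
  epi_of_epi_fac hz

end NatTrans

lemma Sheaf.epi_snd_of_epi_of_isTerminal {D : Type u} [SmallCategory D]
    {K : GrothendieckTopology D} {A B T : Sheaf K (Type u)} (hT : IsTerminal T) (f : A ⟶ T)
    [Epi f] : Epi (prod.snd : A ⨯ B ⟶ B) := by
  have := (Sheaf.isLocallySurjective_iff_epi f).2 inferInstance
  rw [← Sheaf.isLocallySurjective_iff_epi]
  refine ⟨fun {U} s => ?_⟩
  have hTU : IsTerminal (T.obj.obj (op U)) :=
    (hT.isTerminalObj (sheafToPresheaf K _)).isTerminalObj ((evaluation _ _).obj _)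
  refine K.superset_covering ?_ (Presheaf.imageSieve_mem K f.hom (hTU.from PUnit PUnit.unit))
  rintro V g ⟨a, -⟩
  let ev := sheafToPresheaf K (Type u) ⋙ (evaluation Dᵒᵖ (Type u)).obj (op V)
  obtain ⟨t, -, ht⟩ := BinaryFan.IsLimit.lift'
    (isLimitMapConeBinaryFanEquiv ev _ _ (isLimitOfPreserves ev (prodIsProd A B)))
    (↾fun _ : PUnit.{u + 1} => a) (↾fun _ => B.obj.map g.op s)
  exact ⟨t PUnit.unit, types_congr_hom ht PUnit.unit⟩

namespace SingleObj

variable (G : Type u) [Group G]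

abbrev leftRegular : SingleObj G ⥤ Type u := coyoneda.obj (op (star G))

def divLeft : leftRegular G ⊗ leftRegular G ⟶ (Functor.const _).obj G where
  app _ := ↾fun (p : G × G) => p.1⁻¹ * p.2
  naturality _ _ g := by
    ext (⟨x, y⟩ : G × G)
    change ((g : G) * x)⁻¹ * (g * y) = x⁻¹ * y
    group

def mulRight : leftRegular G ⊗ (Functor.const _).obj G ⟶ leftRegular G where
  app _ := ↾fun (p : G × G) => p.1 * p.2
  naturality _ _ g := by
    ext (⟨x, y⟩ : G × G)
    exact mul_assoc (G := G) g x y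

instance : IsIso (lift (fst _ _) (divLeft G)) :=
  ⟨lift (fst _ _) (mulRight G),
    by ext : 2 <;> ext ⟨⟩ (⟨x, y⟩ : G × G); exacts [rfl, mul_inv_cancel_left x y],
    by ext : 2 <;> ext ⟨⟩ (⟨x, y⟩ : G × G); exacts [rfl, inv_mul_cancel_left x y]⟩

instance : Epi (toUnit (leftRegular G)) := by
  have (X : SingleObj G) : Epi ((toUnit (leftRegular G)).app X) :=
    (epi_iff_surjective _).2 fun _ => ⟨(1 : G), rfl⟩
  exact NatTrans.epi_of_epi_app _

end SingleObj

end CategoryTheory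

/-- For any group `G`, the topos of `G`-sets is grouplike. -/
theorem statement17 (G : Type u) [Group G] :
    Grouplike.{u} (SingleObj G ⥤ Type u) := by
  intro D _ K P Q ⟨_⟩ ⟨_⟩ ⟨_⟩ ⟨_⟩ τ
  let R := SingleObj.leftRegular G
  have hunit : IsIso (τ.app (𝟙_ (SingleObj G ⥤ Type u))) :=
    NatTrans.isIso_app_of_isTerminal τ isTerminalTensorUnit
  have hconst : IsIso (τ.app ((Functor.const _).obj G)) := NatTrans.isIso_app_const τ G hunit
  have hmono : Mono (τ.app R) := NatTrans.mono_app_of_isIso_lift_fst τ (SingleObj.divLeft G)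
  have hsnd : Epi (prod.snd : P.obj R ⨯ Q.obj R ⟶ Q.obj R) :=
    Sheaf.epi_snd_of_epi_of_isTerminal (isTerminalTensorUnit.isTerminalObj P) (P.map (toUnit R))
  have hepi : Epi (τ.app R) :=
    NatTrans.epi_app_of_isIso_lift_fst τ (SingleObj.divLeft G) prod.fst prod.snd
  have hR : IsIso (τ.app R) := isIso_of_mono_of_epi _
  refine NatTrans.isIso_of_isIso_app_of_isDense τ coyoneda ?_
  rintro ⟨⟨⟩⟩
  exact hR
end

section
/- Let (C,J) be a small site with C having finite limits, let ℓ : (Cᵒᵖ ⥤ Type) ⥤ Sheaf J (Type) be sheafification, and ŷ := ℓ ∘ y the sheafified Yoneda embedding. Let E and F be Grothendieck topoi and f^* ⊣ f_* an adjunction with f^* : F ⥤ E preserving finite limits. Assume that for every functor x^* : Sheaf J (Type) ⥤ E preserving finite limits and small colimits, the pointwise left Kan extension along Yoneda of the composite f_* ∘ x^* ∘ ŷ : C ⥤ F sends the inclusion S ↪ y(c) of every J-covering sieve to an isomorphism. Then for every such x^* there exist a functor R(x^*) : Sheaf J (Type) ⥤ F preserving finite limits and small colimits and a bijection, natural in functors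 g^* : Sheaf J (Type) ⥤ F preserving finite limits and small colimits, between natural transformations f^* ∘ g^* ⟶ x^* and natural transformations g^* ⟶ R(x^*). (General criterion: under this continuity hypothesis the topos Sh(C,J) is weakly right Kan injective with respect to f, with presentation by the presheaf topos on C.) -/
universe u

open CategoryTheory Limits

/-!
Put `A := f_* ∘ x^* ∘ ŷ : C ⥤ F`, a finite-limit-preserving functor. Its Yoneda extension
`Lan_y A` is cocontinuous, and left exact because `A` is flat. Its right adjoint
`X ↦ Hom(A -, X)` takes values in `J`-sheaves exactly because `Lan_y A` inverts the inclusions of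
covering sieves; hence `Lan_y A` inverts every `J`-local isomorphism, and its restriction `R` to
sheaves is again cocontinuous and left exact, with `R ∘ ŷ ≅ A`. A cocontinuous `g` out of
`Sh(C, J)` is determined by its restriction along `ŷ`, so naturally in `g`
`(f^* ∘ g ⟶ x^*) ≃ (g ⟶ f_* ∘ x^*) ≃ (g ∘ ŷ ⟶ A) ≃ (g ∘ ŷ ⟶ R ∘ ŷ) ≃ (g ⟶ R)`.
-/

universe v

namespace CategoryTheory

lemma Functor.isLeftKanExtension_comp_whiskerRight_of_iso₁ {C D H : Type*} [Category C]
    [Category D] [Category H] {L L' : C ⥤ D} (e : L ≅ L') {F : C ⥤ H} (G : D ⥤ H)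
    (α : F ⟶ L ⋙ G) [G.IsLeftKanExtension α] :
    G.IsLeftKanExtension (α ≫ Functor.whiskerRight e.hom G) :=
  ⟨⟨(IsInitial.isInitialIffObj (leftExtensionEquivalenceOfIso₁ e F).functor _).1
    (G.isUniversalOfIsLeftKanExtension α)⟩⟩

lemma Adjunction.isIso_map_iff_bijective {D E : Type*} [Category D] [Category E]
    {F : D ⥤ E} {G : E ⥤ D} (adj : F ⊣ G) {X Y : D} (f : X ⟶ Y) :
    IsIso (F.map f) ↔ ∀ Z : E, Function.Bijective (fun g : Y ⟶ G.obj Z => f ≫ g) := by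
  rw [isIso_iff_coyoneda_map_bijective]
  refine forall_congr' fun Z => ?_
  have : (fun g : F.obj Y ⟶ Z => F.map f ≫ g) =
      (adj.homEquiv X Z).symm ∘ (fun g : Y ⟶ G.obj Z => f ≫ g) ∘ adj.homEquiv Y Z := by
    funext g
    simp [← Adjunction.homEquiv_naturality_left]
  rw [this, Equiv.comp_bijective, Equiv.bijective_comp]

variable {C : Type u} [SmallCategory C]

section YonedaExtension

variable {ℰ : Type v} [Category.{u} ℰ] [HasColimitsOfSize.{u, u} ℰ]

lemma isLeftKanExtension_yoneda_of_preservesColimits {A : C ⥤ ℰ} (L : (Cᵒᵖ ⥤ Type u) ⥤ ℰ)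
    (e : A ≅ yoneda ⋙ L) [PreservesColimitsOfSize.{u, u} L] : L.IsLeftKanExtension e.hom := by
  let e' := e ≪≫ Functor.isoWhiskerRight uliftYonedaIsoYoneda.{u}.symm L
  have := Presheaf.isLeftKanExtension_of_preservesColimits.{0} L e'
  have := Functor.isLeftKanExtension_comp_whiskerRight_of_iso₁ uliftYonedaIsoYoneda.{u} L e'.hom
  convert this
  ext X
  simp [e', ← Functor.map_comp]

noncomputable def isoOfPreservesColimitsOfCompYonedaIso (L L' : (Cᵒᵖ ⥤ Type u) ⥤ ℰ)
    [PreservesColimitsOfSize.{u, u} L] [PreservesColimitsOfSize.{u, u} L']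
    (e : yoneda ⋙ L ≅ yoneda ⋙ L') : L ≅ L' :=
  have := isLeftKanExtension_yoneda_of_preservesColimits L (Iso.refl _)
  have := isLeftKanExtension_yoneda_of_preservesColimits L' e
  Functor.leftKanExtensionUnique L (Iso.refl _).hom L' e.hom

instance isIso_leftKanExtensionUnit_yoneda (A : C ⥤ ℰ) :
    IsIso (yoneda.leftKanExtensionUnit A) :=
  (Functor.isPointwiseLeftKanExtensionLeftKanExtensionUnit yoneda A).isIso_hom

noncomputable def yonedaAdjunction {A : C ⥤ ℰ} (L : (Cᵒᵖ ⥤ Type u) ⥤ ℰ) (α : A ⟶ yoneda ⋙ L)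
    [L.IsLeftKanExtension α] : L ⊣ Presheaf.restrictedULiftYoneda.{u} A :=
  have := Functor.isLeftKanExtension_comp_whiskerRight_of_iso₁ uliftYonedaIsoYoneda.{u}.symm L α
  Presheaf.uliftYonedaAdjunction.{0} L
    (α ≫ Functor.whiskerRight uliftYonedaIsoYoneda.{u}.symm.hom L)

end YonedaExtension

section FiniteLimits

variable [HasFiniteLimits C]

lemma preservesFiniteLimits_whiskeringLeft_π_comp_colim (B : C ⥤ Type u)
    [PreservesFiniteLimits B] :
    PreservesFiniteLimits ((Functor.whiskeringLeft _ _ (Type u)).obj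
      (CategoryOfElements.π B).op ⋙ colim) :=
  have := B.isCofiltered_elements
  have : PreservesFiniteLimits ((Functor.whiskeringLeft _ _ (Type u)).obj
      (CategoryOfElements.π B).op) := PreservesLimitsOfSize.preservesFiniteLimits.{0, 0} _
  comp_preservesFiniteLimits _ _

/-- `L` is the colimit over the cofiltered category of elements of `yoneda ⋙ L`, and filtered
colimits commute with finite limits in `Type u`. -/
lemma preservesFiniteLimits_of_preservesColimits_of_comp_yoneda (L : (Cᵒᵖ ⥤ Type u) ⥤ Type u)
    [PreservesColimitsOfSize.{u, u} L] [PreservesFiniteLimits (yoneda ⋙ L)] :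
    PreservesFiniteLimits L := by
  let B := yoneda ⋙ L
  have := preservesFiniteLimits_whiskeringLeft_π_comp_colim B
  have e : yoneda ⋙ ((Functor.whiskeringLeft _ _ (Type u)).obj (CategoryOfElements.π B).op ⋙
      colim) ≅ yoneda ⋙ L :=
    Functor.isoWhiskerRight shrinkYonedaIsoYoneda.symm _ ≪≫
      Functor.Elements.shrinkYonedaCompWhiskeringLeftObjπCompColimIso B
  exact preservesFiniteLimits_of_natIso (isoOfPreservesColimitsOfCompYonedaIso _ _ e)

variable {D : Type u} [SmallCategory D]

lemma preservesFiniteLimits_of_preservesColimits_of_comp_yoneda_presheaf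
    (L : (Cᵒᵖ ⥤ Type u) ⥤ (Dᵒᵖ ⥤ Type u))
    [PreservesColimitsOfSize.{u, u} L] [PreservesFiniteLimits (yoneda ⋙ L)] :
    PreservesFiniteLimits L where
  preservesFiniteLimits _ _ _ := preservesLimitsOfShape_of_evaluation _ _ fun d =>
    have : PreservesFiniteLimits (yoneda ⋙ L ⋙ (evaluation Dᵒᵖ (Type u)).obj d) :=
      comp_preservesFiniteLimits (yoneda ⋙ L) ((evaluation Dᵒᵖ (Type u)).obj d)
    have := preservesFiniteLimits_of_preservesColimits_of_comp_yoneda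
      (L ⋙ (evaluation Dᵒᵖ (Type u)).obj d)
    inferInstance

lemma preservesFiniteLimits_of_preservesColimits_of_comp_yoneda_sheaf
    (K : GrothendieckTopology D) (L : (Cᵒᵖ ⥤ Type u) ⥤ Sheaf K (Type u))
    [PreservesColimitsOfSize.{u, u} L] [PreservesFiniteLimits (yoneda ⋙ L)] :
    PreservesFiniteLimits L := by
  have : HasColimitsOfSize.{u, u} (Sheaf K (Type u)) := Sheaf.instHasColimitsOfSize
  let A := (yoneda ⋙ L) ⋙ sheafToPresheaf K (Type u)
  let L₀ := yoneda.leftKanExtension A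
  have : PreservesColimitsOfSize.{u, u} L₀ :=
    (yonedaAdjunction L₀ (yoneda.leftKanExtensionUnit A)).leftAdjoint_preservesColimits
  have : PreservesFiniteLimits (yoneda ⋙ L₀) :=
    preservesFiniteLimits_of_natIso (asIso (yoneda.leftKanExtensionUnit A))
  have := preservesFiniteLimits_of_preservesColimits_of_comp_yoneda_presheaf L₀
  have e : yoneda ⋙ L₀ ⋙ presheafToSheaf K (Type u) ≅ yoneda ⋙ L :=
    (Functor.associator _ _ _).symm ≪≫
      Functor.isoWhiskerRight (asIso (yoneda.leftKanExtensionUnit A)).symm _ ≪≫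
      Functor.associator _ _ _ ≪≫
      Functor.isoWhiskerLeft _ (asIso (sheafificationAdjunction K (Type u)).counit) ≪≫
      Functor.rightUnitor _
  exact preservesFiniteLimits_of_natIso (isoOfPreservesColimitsOfCompYonedaIso _ _ e)

end FiniteLimits

section Sheaves

variable (J : GrothendieckTopology C) {ℰ : Type v} [Category.{u} ℰ]
  {R : (Cᵒᵖ ⥤ Type u) ⥤ ℰ} {G : ℰ ⥤ (Cᵒᵖ ⥤ Type u)} (adj : R ⊣ G)

include adj

lemma Adjunction.isSheaf_obj_of_isIso_map_functorInclusion
    (hR : ∀ (c : C) (S : Sieve c), S ∈ J c → IsIso (R.map S.functorInclusion)) (X : ℰ) :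
    Presheaf.IsSheaf J (G.obj X) := by
  rw [isSheaf_iff_isSheaf_of_type]
  intro c S hS
  rw [Presieve.isSheafFor_iff_yonedaSheafCondition]
  exact (Function.bijective_iff_existsUnique _).1
    ((adj.isIso_map_iff_bijective S.functorInclusion).1 (hR c S hS) X)

variable {J}

lemma Adjunction.isIso_map_of_W (hG : ∀ X, Presheaf.IsSheaf J (G.obj X))
    {P Q : Cᵒᵖ ⥤ Type u} {w : P ⟶ Q} (hw : J.W w) : IsIso (R.map w) :=
  (adj.isIso_map_iff_bijective w).2 fun X => hw _ (hG X)

noncomputable def Adjunction.restrictSheaf (hG : ∀ X, Presheaf.IsSheaf J (G.obj X)) :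
    sheafToPresheaf J (Type u) ⋙ R ⊣ ObjectProperty.lift _ G hG :=
  adj.restrictFullyFaithful (fullyFaithfulSheafToPresheaf J _) (Functor.FullyFaithful.id _)
    (Functor.rightUnitor _).symm
    (Functor.leftUnitor _ ≪≫ (ObjectProperty.liftCompιIso _ _ _).symm)

lemma Adjunction.isIso_whiskerRight_sheafificationAdjunction_unit
    (hG : ∀ X, Presheaf.IsSheaf J (G.obj X)) :
    IsIso (Functor.whiskerRight (sheafificationAdjunction J (Type u)).unit R) :=
  have (P : Cᵒᵖ ⥤ Type u) :
      IsIso ((Functor.whiskerRight (sheafificationAdjunction J (Type u)).unit R).app P) :=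
    adj.isIso_map_of_W hG (J.W_adj_unit_app _ P)
  NatIso.isIso_of_isIso_app _

end Sheaves

section SheafifiedYoneda

variable (J : GrothendieckTopology C) {E : Type v} [Category.{u} E] [HasColimitsOfSize.{u, u} E]

/-- Whiskering with the localization `presheafToSheaf J` is fully faithful, and the cocontinuous
`presheafToSheaf J ⋙ g` is the Yoneda extension of its restriction. -/
noncomputable def sheafifiedYonedaRestrictionEquiv (g H : Sheaf J (Type u) ⥤ E)
    [PreservesColimitsOfSize.{u, u} g] :
    (g ⟶ H) ≃ ((yoneda ⋙ presheafToSheaf J (Type u)) ⋙ g ⟶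
      (yoneda ⋙ presheafToSheaf J (Type u)) ⋙ H) :=
  have := Localization.full_whiskeringLeft (presheafToSheaf J (Type u)) J.W E
  have := Localization.faithful_whiskeringLeft (presheafToSheaf J (Type u)) J.W E
  have := (sheafificationAdjunction J (Type u)).leftAdjoint_preservesColimits
  have := isLeftKanExtension_yoneda_of_preservesColimits (presheafToSheaf J (Type u) ⋙ g)
    (Iso.refl _)
  (Functor.FullyFaithful.ofFullyFaithful
    ((Functor.whiskeringLeft _ _ E).obj (presheafToSheaf J (Type u)))).homEquiv.trans
    ((presheafToSheaf J (Type u) ⋙ g).homEquivOfIsLeftKanExtension (Iso.refl _).hom _)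

@[simp]
lemma sheafifiedYonedaRestrictionEquiv_apply (g H : Sheaf J (Type u) ⥤ E)
    [PreservesColimitsOfSize.{u, u} g] (σ : g ⟶ H) :
    sheafifiedYonedaRestrictionEquiv J g H σ =
      Functor.whiskerLeft (yoneda ⋙ presheafToSheaf J (Type u)) σ := by
  ext
  simp [sheafifiedYonedaRestrictionEquiv, Functor.FullyFaithful.homEquiv]

variable {J}

noncomputable def homEquivOfCompSheafifiedYonedaIso {H H' : Sheaf J (Type u) ⥤ E}
    (e : (yoneda ⋙ presheafToSheaf J (Type u)) ⋙ H ≅ (yoneda ⋙ presheafToSheaf J (Type u)) ⋙ H')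
    (g : Sheaf J (Type u) ⥤ E) [PreservesColimitsOfSize.{u, u} g] : (g ⟶ H) ≃ (g ⟶ H') :=
  ((sheafifiedYonedaRestrictionEquiv J g H).trans ((Iso.refl _).homCongr e)).trans
    (sheafifiedYonedaRestrictionEquiv J g H').symm

lemma homEquivOfCompSheafifiedYonedaIso_comp {H H' : Sheaf J (Type u) ⥤ E}
    (e : (yoneda ⋙ presheafToSheaf J (Type u)) ⋙ H ≅ (yoneda ⋙ presheafToSheaf J (Type u)) ⋙ H')
    {g g' : Sheaf J (Type u) ⥤ E} [PreservesColimitsOfSize.{u, u} g]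
    [PreservesColimitsOfSize.{u, u} g'] (φ : g' ⟶ g) (γ : g ⟶ H) :
    homEquivOfCompSheafifiedYonedaIso e g' (φ ≫ γ) =
      φ ≫ homEquivOfCompSheafifiedYonedaIso e g γ := by
  apply (sheafifiedYonedaRestrictionEquiv J g' H').injective
  have h := (sheafifiedYonedaRestrictionEquiv J g H').apply_symm_apply
  simp only [sheafifiedYonedaRestrictionEquiv_apply] at h
  simp [homEquivOfCompSheafifiedYonedaIso, h]

end SheafifiedYoneda

theorem exists_isPoint_comp_sheafifiedYoneda_iso [HasFiniteLimits C]
    (J : GrothendieckTopology C) {D : Type u} [SmallCategory D]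
    {K : GrothendieckTopology D} (A : C ⥤ Sheaf K (Type u)) [PreservesFiniteLimits A]
    (hA : ∀ (c : C) (S : Sieve c), S ∈ J c →
      IsIso ((yoneda.leftKanExtension A).map S.functorInclusion)) :
    ∃ R : Sheaf J (Type u) ⥤ Sheaf K (Type u), IsPoint.{u} R ∧
      Nonempty ((yoneda ⋙ presheafToSheaf J (Type u)) ⋙ R ≅ A) := by
  have : HasColimitsOfSize.{u, u} (Sheaf K (Type u)) := Sheaf.instHasColimitsOfSize
  let R₀ := yoneda.leftKanExtension A
  let adj := yonedaAdjunction R₀ (yoneda.leftKanExtensionUnit A)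
  have hG := adj.isSheaf_obj_of_isIso_map_functorInclusion J hA
  have := adj.isIso_whiskerRight_sheafificationAdjunction_unit hG
  have : PreservesColimitsOfSize.{u, u} R₀ := adj.leftAdjoint_preservesColimits
  have : PreservesFiniteLimits (yoneda ⋙ R₀) :=
    preservesFiniteLimits_of_natIso (asIso (yoneda.leftKanExtensionUnit A))
  have := preservesFiniteLimits_of_preservesColimits_of_comp_yoneda_sheaf K R₀
  refine ⟨sheafToPresheaf J (Type u) ⋙ R₀,
    ⟨⟨comp_preservesFiniteLimits _ _⟩, ⟨(adj.restrictSheaf hG).leftAdjoint_preservesColimits⟩⟩,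
    ⟨?_⟩⟩
  exact Functor.isoWhiskerLeft yoneda
    (asIso (Functor.whiskerRight (sheafificationAdjunction J (Type u)).unit R₀)).symm ≪≫
      (asIso (yoneda.leftKanExtensionUnit A)).symm

end CategoryTheory

open CategoryTheory

theorem statement18_general {C : Type u} [SmallCategory C] [HasFiniteLimits C]
    (J : GrothendieckTopology C)
    {D₁ D₂ : Type u} [SmallCategory D₁] [SmallCategory D₂]
    (J₁ : GrothendieckTopology D₁) (K₂ : GrothendieckTopology D₂)
    (fstar : Sheaf K₂ (Type u) ⥤ Sheaf J₁ (Type u))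
    (fsub : Sheaf J₁ (Type u) ⥤ Sheaf K₂ (Type u))
    (adj : fstar ⊣ fsub)
    (hcont : ∀ (xstar : Sheaf J (Type u) ⥤ Sheaf J₁ (Type u)), IsPoint.{u} xstar →
      ∀ (R₀ : (Cᵒᵖ ⥤ Type u) ⥤ Sheaf K₂ (Type u))
        (α : (yoneda ⋙ presheafToSheaf J (Type u)) ⋙ xstar ⋙ fsub ⟶ yoneda ⋙ R₀),
        (Functor.LeftExtension.mk R₀ α).IsPointwiseLeftKanExtension →
        ∀ (c : C) (S : Sieve c), S ∈ J c → IsIso (R₀.map S.functorInclusion)) :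
    ∀ (xstar : Sheaf J (Type u) ⥤ Sheaf J₁ (Type u)), IsPoint.{u} xstar →
      ∃ R : Sheaf J (Type u) ⥤ Sheaf K₂ (Type u), IsPoint.{u} R ∧
        ∃ e : ∀ g : Sheaf J (Type u) ⥤ Sheaf K₂ (Type u),
            IsPoint.{u} g → (((g ⋙ fstar) ⟶ xstar) ≃ (g ⟶ R)),
          ∀ (g g' : Sheaf J (Type u) ⥤ Sheaf K₂ (Type u))
            (hg : IsPoint.{u} g) (hg' : IsPoint.{u} g')
            (φ : g' ⟶ g) (β : (g ⋙ fstar) ⟶ xstar),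
            e g' hg' (Functor.whiskerRight φ fstar ≫ β) = φ ≫ e g hg β := by
  intro xstar hx
  have := hx.1.some
  have := hx.2.some
  have : HasColimitsOfSize.{u, u} (Sheaf K₂ (Type u)) := Sheaf.instHasColimitsOfSize
  have : PreservesFiniteLimits fsub :=
    adj.rightAdjoint_preservesLimits.preservesFiniteLimits.{0, 0}
  have : PreservesFiniteLimits ((yoneda ⋙ presheafToSheaf J (Type u)) ⋙ xstar ⋙ fsub) :=
    comp_preservesFiniteLimits _ _
  obtain ⟨R, hR, ⟨e⟩⟩ := exists_isPoint_comp_sheafifiedYoneda_iso J _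
    (hcont xstar hx _ _ (Functor.isPointwiseLeftKanExtensionLeftKanExtensionUnit yoneda _))
  refine ⟨R, hR, fun g hg => have := hg.2.some
    ((adj.whiskerRight _).homEquiv g xstar).trans (homEquivOfCompSheafifiedYonedaIso e.symm g),
    fun g g' hg hg' φ β => ?_⟩
  have := hg.2.some
  have := hg'.2.some
  simp only [Equiv.trans_apply]
  rw [← homEquivOfCompSheafifiedYonedaIso_comp, ← Adjunction.homEquiv_naturality_left]
  rfl

/-- General criterion for weak right Kan injectivity of a sheaf topos `Sh(C, J)` with
respect to a geometric morphism `f^* ⊣ f_*`: if for every point `x^*` of `Sh(C, J)` the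
pointwise left Kan extension along Yoneda of `f_* ∘ x^* ∘ ŷ` sends the inclusion of every
`J`-covering sieve into its representable to an isomorphism, then for every point `x^*`
there is a point `R(x^*)` of `Sh(C, J)` in `F` together with a bijection, natural in
points `g^*`, between natural transformations `f^* ∘ g^* ⟶ x^*` and `g^* ⟶ R(x^*)`. -/
theorem statement18 {C : Type u} [SmallCategory C] [HasFiniteLimits C]
    (J : GrothendieckTopology C)
    {D₁ D₂ : Type u} [SmallCategory D₁] [SmallCategory D₂]
    (J₁ : GrothendieckTopology D₁) (K₂ : GrothendieckTopology D₂)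
    (fstar : Sheaf K₂ (Type u) ⥤ Sheaf J₁ (Type u))
    (fsub : Sheaf J₁ (Type u) ⥤ Sheaf K₂ (Type u))
    (adj : fstar ⊣ fsub) [PreservesFiniteLimits fstar]
    (hcont : ∀ (xstar : Sheaf J (Type u) ⥤ Sheaf J₁ (Type u)), IsPoint.{u} xstar →
      ∀ (R₀ : (Cᵒᵖ ⥤ Type u) ⥤ Sheaf K₂ (Type u))
        (α : (yoneda ⋙ presheafToSheaf J (Type u)) ⋙ xstar ⋙ fsub ⟶ yoneda ⋙ R₀),
        (Functor.LeftExtension.mk R₀ α).IsPointwiseLeftKanExtension →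
        ∀ (c : C) (S : Sieve c), S ∈ J c → IsIso (R₀.map S.functorInclusion)) :
    ∀ (xstar : Sheaf J (Type u) ⥤ Sheaf J₁ (Type u)), IsPoint.{u} xstar →
      ∃ R : Sheaf J (Type u) ⥤ Sheaf K₂ (Type u), IsPoint.{u} R ∧
        ∃ e : ∀ g : Sheaf J (Type u) ⥤ Sheaf K₂ (Type u),
            IsPoint.{u} g → (((g ⋙ fstar) ⟶ xstar) ≃ (g ⟶ R)),
          ∀ (g g' : Sheaf J (Type u) ⥤ Sheaf K₂ (Type u))
            (hg : IsPoint.{u} g) (hg' : IsPoint.{u} g')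
            (φ : g' ⟶ g) (β : (g ⋙ fstar) ⟶ xstar),
            e g' hg' (Functor.whiskerRight φ fstar ≫ β) = φ ≫ e g hg β :=
  statement18_general J J₁ K₂ fstar fsub adj hcont
end
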